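/- arXiv:1712.08913 — 9 statements merged into one kernel-verified Lean document; each statement's English description precedes it below -/
import Mathlib

section
/- Let H be a finite group and p a prime such that the only normal p-subgroup of H is the trivial subgroup. Let M be a p-local subgroup of H that is maximal with respect to inclusion among all p-local subgroups of H. Then there exists a nontrivial p-subgroup R of H such that M = N_H(R), R is normal in M, and every normal p-subgroup of M is contained in R (so R is the largest normal p-subgroup of its own normalizer, i.e. R is a radical p-subgroup of H). -/
/-!
Write `M = N_H(Q)` and let `R` be the largest normal `p`-subgroup of `M`. Since `Q` is normal in
its normalizer, `Q ≤ R`, so `R` is a nontrivial `p`-subgroup whose normalizer contains `M`; as that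
normalizer is again `p`-local, maximality of `M` forces `N_H(R) = M`.
-/

namespace Subgroup

variable (p : ℕ) (G : Type*) [Group G]

def pCore : Subgroup G := ⨆ N : {N : Subgroup G // N.Normal ∧ IsPGroup p N}, N.1

instance pCore_normal : (pCore p G).Normal :=
  haveI (N : {N : Subgroup G // N.Normal ∧ IsPGroup p N}) : N.1.Normal := N.2.1
  iSup_normal _

variable {p G}

theorem le_pCore {N : Subgroup G} (hN : N.Normal) (hp : IsPGroup p N) : N ≤ pCore p G :=
  le_iSup (fun N : {N : Subgroup G // N.Normal ∧ IsPGroup p N} ↦ N.1) ⟨N, hN, hp⟩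

theorem isPGroup_pCore [Fact p.Prime] [Finite G] : IsPGroup p (pCore p G) :=
  haveI (N : {N : Subgroup G // N.Normal ∧ IsPGroup p N}) : N.1.Normal := N.2.1
  Sylow.iSup_of_normal _ fun N ↦ N.2.2

end Subgroup

open Subgroup

theorem maximal_p_local_is_normalizer_of_radical_general
    (p : ℕ) [Fact p.Prime] (H : Type*) [Group H] [Finite H]
    (M : Subgroup H)
    (hM : ∃ Q : Subgroup H, Q ≠ ⊥ ∧ IsPGroup p Q ∧ M = Subgroup.normalizer (Q : Set H))
    (hmax : ∀ M' : Subgroup H,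
      (∃ Q : Subgroup H, Q ≠ ⊥ ∧ IsPGroup p Q ∧ M' = Subgroup.normalizer (Q : Set H)) → M ≤ M' → M' = M) :
    ∃ R : Subgroup H, R ≠ ⊥ ∧ IsPGroup p R ∧ M = Subgroup.normalizer (R : Set H) ∧
      (R.subgroupOf M).Normal ∧
      ∀ S : Subgroup ↥M, S.Normal → IsPGroup p S → S ≤ R.subgroupOf M := by
  obtain ⟨Q, hQ, hQp, rfl⟩ := hM
  set M := normalizer (Q : Set H)
  set R := (pCore p M).map M.subtype
  have hRM : R.subgroupOf M = pCore p M := comap_map_eq_self_of_injective M.subtype_injective _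
  have hQR : Q ≤ R := by
    rw [← map_subgroupOf_eq_of_le (le_normalizer (H := Q))]
    exact map_mono (le_pCore normal_in_normalizer (hQp.comap_of_injective _ M.subtype_injective))
  have hRp : IsPGroup p R := isPGroup_pCore.map _
  have hR : R ≠ ⊥ := fun h ↦ hQ (le_bot_iff.mp (h ▸ hQR))
  have hMR : M ≤ normalizer (R : Set H) := by
    have : (R.subgroupOf M).Normal := hRM ▸ pCore_normal p M
    exact le_normalizer_of_normal_subgroupOf (map_subtype_le _)
  refine ⟨R, hR, hRp, (hmax _ ⟨R, hR, hRp, rfl⟩ hMR).symm, hRM ▸ pCore_normal p M, ?_⟩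
  exact fun S hS hSp ↦ hRM ▸ le_pCore hS hSp

/-- If `H` is a finite group with no nontrivial normal `p`-subgroup, then any
maximal `p`-local subgroup `M` of `H` is the normalizer of a radical `p`-subgroup `R`:
`R` is a nontrivial `p`-subgroup with `M = N_H(R)`, `R` is normal in `M`, and every normal
`p`-subgroup of `M` is contained in `R`. -/
theorem maximal_p_local_is_normalizer_of_radical
    (p : ℕ) [Fact p.Prime] (H : Type*) [Group H] [Finite H]
    (hO : ∀ Q : Subgroup H, Q.Normal → IsPGroup p Q → Q = ⊥)
    (M : Subgroup H)
    (hM : ∃ Q : Subgroup H, Q ≠ ⊥ ∧ IsPGroup p Q ∧ M = Subgroup.normalizer (Q : Set H))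
    (hmax : ∀ M' : Subgroup H,
      (∃ Q : Subgroup H, Q ≠ ⊥ ∧ IsPGroup p Q ∧ M' = Subgroup.normalizer (Q : Set H)) → M ≤ M' → M' = M) :
    ∃ R : Subgroup H, R ≠ ⊥ ∧ IsPGroup p R ∧ M = Subgroup.normalizer (R : Set H) ∧
      (R.subgroupOf M).Normal ∧
      ∀ S : Subgroup ↥M, S.Normal → IsPGroup p S → S ≤ R.subgroupOf M :=
  maximal_p_local_is_normalizer_of_radical_general p H M hM hmax
end

section
/- Let H be a finite group, p a prime, and Q_1, Q_2 Sylow p-subgroups of H such that D = Q_1 ∩ Q_2 is a tame intersection, i.e. N_{Q_1}(D) and N_{Q_2}(D) are Sylow p-subgroups of N_H(D). Then every normal p-subgroup of N_H(D) is contained in D; consequently, since D itself is a normal p-subgroup of N_H(D), D is the largest normal p-subgroup of N_H(D) (i.e. D is a radical p-subgroup of H). -/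
/-! A normal `p`-subgroup of `N_H(D)` lies in every Sylow `p`-subgroup of `N_H(D)`, in particular
in `N_{Q₁}(D) = Q₁ ∩ N_H(D)` and in `N_{Q₂}(D) = Q₂ ∩ N_H(D)`, hence in `Q₁ ∩ Q₂ = D`. -/

/-- `P` (a subgroup of `H`) is a Sylow `p`-subgroup of the subgroup `X` of `H`. -/
def IsSylowIn (p : ℕ) {H : Type*} [Group H] (P X : Subgroup H) : Prop :=
  ∃ S : Sylow p ↥X, (S : Subgroup ↥X) = P.subgroupOf X

theorem IsSylowIn.le_of_normal {p : ℕ} {H : Type*} [Group H] {P X : Subgroup H}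
    (hP : IsSylowIn p P X) {S : Subgroup X} (hS : S.Normal) (hSp : IsPGroup p S) :
    S ≤ P.subgroupOf X := by
  obtain ⟨T, hT⟩ := hP
  exact hT ▸ hSp.le_sylow_of_normal T

theorem tame_intersection_is_radical_general
    (p : ℕ) (H : Type*) [Group H]
    (Q₁ Q₂ : Sylow p H) (D : Subgroup H)
    (hD : D = (Q₁ : Subgroup H) ⊓ (Q₂ : Subgroup H))
    (h₁ : IsSylowIn p ((Q₁ : Subgroup H) ⊓ (Subgroup.normalizer (D : Set H))) (Subgroup.normalizer (D : Set H)))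
    (h₂ : IsSylowIn p ((Q₂ : Subgroup H) ⊓ (Subgroup.normalizer (D : Set H))) (Subgroup.normalizer (D : Set H))) :
    (∀ S : Subgroup ↥(Subgroup.normalizer (D : Set H)), S.Normal → IsPGroup p S →
        S ≤ D.subgroupOf (Subgroup.normalizer (D : Set H))) ∧
      (D.subgroupOf (Subgroup.normalizer (D : Set H))).Normal ∧ IsPGroup p (D.subgroupOf (Subgroup.normalizer (D : Set H))) := by
  subst hD
  refine ⟨fun S hS hSp => ?_, Subgroup.normal_in_normalizer, Q₁.isPGroup'.to_inf_left.comap_subtype⟩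
  have hS₁ := h₁.le_of_normal hS hSp
  have hS₂ := h₂.le_of_normal hS hSp
  rw [Subgroup.inf_subgroupOf_right] at hS₁ hS₂
  exact le_inf hS₁ hS₂

/-- if `D = Q₁ ⊓ Q₂` is a tame intersection of Sylow `p`-subgroups, then every
normal `p`-subgroup of `N_H(D)` is contained in `D`; since `D` is itself a normal `p`-subgroup
of `N_H(D)`, it is the largest such, i.e. `D` is a radical `p`-subgroup of `H`. -/
theorem tame_intersection_is_radical
    (p : ℕ) [Fact p.Prime] (H : Type*) [Group H] [Finite H]
    (Q₁ Q₂ : Sylow p H) (D : Subgroup H)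
    (hD : D = (Q₁ : Subgroup H) ⊓ (Q₂ : Subgroup H))
    (h₁ : IsSylowIn p ((Q₁ : Subgroup H) ⊓ (Subgroup.normalizer (D : Set H))) (Subgroup.normalizer (D : Set H)))
    (h₂ : IsSylowIn p ((Q₂ : Subgroup H) ⊓ (Subgroup.normalizer (D : Set H))) (Subgroup.normalizer (D : Set H))) :
    (∀ S : Subgroup ↥(Subgroup.normalizer (D : Set H)), S.Normal → IsPGroup p S →
        S ≤ D.subgroupOf (Subgroup.normalizer (D : Set H))) ∧
      (D.subgroupOf (Subgroup.normalizer (D : Set H))).Normal ∧ IsPGroup p (D.subgroupOf (Subgroup.normalizer (D : Set H))) :=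
  tame_intersection_is_radical_general p H Q₁ Q₂ D hD h₁ h₂
end

section
/- (Brauer's Third Main Theorem) Let p be a prime, k an algebraically closed field of characteristic p, H a finite group, Q a p-subgroup of H, and N = N_H(Q). Let b_0 be the principal block of k[H], e_0 the principal block of k[N], and f_0 the principal block of k[C_H(Q)]. Then Br_Q(b_0)·e_0 = e_0 and Br_Q(b_0)·f_0 = f_0; that is, under the Brauer correspondence the principal blocks of H, of N_H(Q), and of C_H(Q) correspond. -/
variable {k : Type*} [Field k] {H : Type*} [Group H]

/-- A *block* of a ring: a primitive idempotent of the center, i.e. a nonzero central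
idempotent which is not the sum of two nonzero orthogonal central idempotents. -/
def IsBlockIdem {R : Type*} [Ring R] (b : R) : Prop :=
  b ∈ Subring.center R ∧ IsIdempotentElem b ∧ b ≠ 0 ∧
    ∀ c d : R, c ∈ Subring.center R → d ∈ Subring.center R →
      IsIdempotentElem c → IsIdempotentElem d → c * d = 0 → b = c + d → c = 0 ∨ d = 0

open Classical in
/-- The truncation of `x ∈ k[H]` to a subset `s ⊆ H` (keep only coefficients on `s`). -/
noncomputable def truncate (s : Set H) (x : MonoidAlgebra k H) : MonoidAlgebra k H :=
  MonoidAlgebra.ofCoeff (Finsupp.filter (· ∈ s) x.coeff)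

/-- The Brauer morphism associated with a subgroup `Q ≤ H`: it keeps exactly the
coefficients on the centralizer `C_H(Q)`. -/
noncomputable def Br (Q : Subgroup H) (x : MonoidAlgebra k H) : MonoidAlgebra k H :=
  truncate ((Subgroup.centralizer (Q : Set H) : Subgroup H) : Set H) x

/-- `b` is the image in `k[H]` of a block of the group algebra `k[X]` of the
subgroup `X ≤ H`. -/
def IsBlockOf (X : Subgroup H) (b : MonoidAlgebra k H) : Prop :=
  ∃ b₀ : MonoidAlgebra k ↥X, IsBlockIdem b₀ ∧
    b = MonoidAlgebra.mapDomainRingHom k X.subtype b₀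

/-- Defect groups of a block `b` of `k[H]` : maximal `p`-subgroups `D` with `Br_D(b) ≠ 0`. -/
def IsDefectGroup (p : ℕ) (b : MonoidAlgebra k H) (D : Subgroup H) : Prop :=
  IsPGroup p D ∧ Br D b ≠ 0 ∧
    ∀ D' : Subgroup H, IsPGroup p D' → Br D' b ≠ 0 → D ≤ D' → D' = D

/-- The Brauer morphism relative to a subgroup `X` (for blocks of `k[X]`), associated with a
`p`-subgroup `D ≤ X`: it keeps exactly the coefficients on `C_X(D) = C_H(D) ⊓ X`. -/
noncomputable def BrIn (X D : Subgroup H) (x : MonoidAlgebra k H) : MonoidAlgebra k H :=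
  truncate ((Subgroup.centralizer (D : Set H) ⊓ X : Subgroup H) : Set H) x

/-- Defect groups (inside `X`) of a block `b` of `k[X]`, viewed in `k[H]`. -/
def IsDefectGroupIn (p : ℕ) (X : Subgroup H) (b : MonoidAlgebra k H) (D : Subgroup H) : Prop :=
  D ≤ X ∧ IsPGroup p D ∧ BrIn X D b ≠ 0 ∧
    ∀ D' : Subgroup H, D' ≤ X → IsPGroup p D' → BrIn X D' b ≠ 0 → D ≤ D' → D' = D

/-- The augmentation map `k[H] → k`, `∑ λ_h h ↦ ∑ λ_h`. -/
noncomputable def aug (x : MonoidAlgebra k H) : k :=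
  Finsupp.sum x.coeff fun _ c => c

/-! A `p`-group acting on a finite set has orbits of `p`-power size, so in characteristic `p` the
sum of an invariant function only sees the fixed points. For `Q` acting by conjugation, applied to
the augmentation and to the coefficients `(xy)_h = ∑_u x_u y_{u⁻¹h}` with `h ∈ C_H(Q)`, this makes
`Br_Q` multiplicative and augmentation-preserving on `Q`-stable elements. So `Br_Q(b₀)` is an
idempotent of augmentation `1`; its coefficients are `N_H(Q)`-class functions supported on
`C_H(Q)`, hence it is central in `k[X]` for every `C_H(Q) ≤ X ≤ N_H(Q)`. A block `e` of `k[X]` of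
augmentation `1` is the orthogonal sum `Br_Q(b₀)e + (1 - Br_Q(b₀))e` of central idempotents, and
the first summand has augmentation `1`, so primitivity kills the second. -/

open MulAction in
theorem IsPGroup.natCast_card_orbit_eq_zero {p : ℕ} [Fact p.Prime] {G α R : Type*} [Group G]
    [MulAction G α] [Semiring R] [CharP R p] (hG : IsPGroup p G) {a : α}
    [Finite (orbit G a)] (ha : a ∉ fixedPoints G α) : (Nat.card (orbit G a) : R) = 0 := by
  obtain ⟨n, hn⟩ := hG.card_orbit a
  have hn0 : n ≠ 0 := by
    rintro rfl
    have := Fintype.ofFinite (orbit G a)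
    rw [pow_zero, Nat.card_eq_fintype_card] at hn
    exact ha (mem_fixedPoints_iff_card_orbit_eq_one.mpr hn)
  rw [hn, Nat.cast_pow, CharP.cast_eq_zero, zero_pow hn0]

open MulAction in
theorem MulAction.eq_of_mem_orbit_of_mem_fixedPoints {G α : Type*} [Group G] [MulAction G α]
    {a b : α} (hb : b ∈ orbit G a) (h : a ∈ fixedPoints G α ∨ b ∈ fixedPoints G α) : b = a := by
  rcases h with ha | hb'
  · exact mem_fixedPoints'.mp ha b hb
  · exact (mem_fixedPoints'.mp hb' a (mem_orbit_symm.mp hb)).symm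

open MulAction in
theorem IsPGroup.sum_eq_sum_fixedPoints {p : ℕ} [Fact p.Prime] {G α R : Type*} [Group G]
    [MulAction G α] [Fintype α] [DecidablePred (· ∈ fixedPoints G α)] [Semiring R] [CharP R p]
    (hG : IsPGroup p G) {f : α → R} (hf : ∀ (g : G) (a : α), f (g • a) = f a) :
    ∑ a, f a = ∑ a with a ∈ fixedPoints G α, f a := by
  classical
  suffices hmoved : ∑ a with a ∉ fixedPoints G α, f a = 0 by
    rw [← Finset.sum_filter_add_sum_filter_not Finset.univ (· ∈ fixedPoints G α), hmoved, add_zero]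
  rw [Finset.sum_filter]
  refine Finset.sum_cancels_of_partition_cancels (orbitRel G α) fun x _ => ?_
  simp only [orbitRel_apply]
  by_cases hx : x ∈ fixedPoints G α
  · refine Finset.sum_eq_zero fun a ha => ?_
    rw [eq_of_mem_orbit_of_mem_fixedPoints (Finset.mem_filter.mp ha).2 (.inl hx),
      if_neg (not_not.mpr hx)]
  · have horbit : ∀ a ∈ Finset.univ.filter (fun a : α => a ∈ orbit G x),
        (if a ∉ fixedPoints G α then f a else 0) = f x := by
      intro a ha
      obtain ⟨g, rfl⟩ := (Finset.mem_filter.mp ha).2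
      have hg : g • x ∉ fixedPoints G α := fun hg =>
        hx (eq_of_mem_orbit_of_mem_fixedPoints (mem_orbit x g) (.inr hg) ▸ hg)
      rw [if_pos hg, hf]
    rw [Finset.sum_congr rfl horbit, Finset.sum_const, nsmul_eq_mul]
    have : (Finset.univ.filter (fun a : α => a ∈ orbit G x)).card = Nat.card (orbit G x) := by
      rw [Nat.card_eq_card_toFinset]; congr; ext; simp
    rw [this, hG.natCast_card_orbit_eq_zero hx, zero_mul]

theorem Subgroup.conj_mem_centralizer_iff {G : Type*} [Group G] {s : Set G} {g : G}
    (hg : g ∈ normalizer s) {h : G} : g * h * g⁻¹ ∈ centralizer s ↔ h ∈ centralizer s := by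
  have hconj := (normal_subgroupOf_iff (centralizer_le_normalizer s)).mp inferInstance
  refine ⟨fun hc => ?_, fun hc => hconj h g hc hg⟩
  simpa [mul_assoc] using hconj _ g⁻¹ hc (inv_mem hg)

theorem Subgroup.sum_eq_sum_centralizer {p : ℕ} [Fact p.Prime] {G R : Type*} [Group G] [Fintype G]
    [Semiring R] [CharP R p] {Q : Subgroup G} [DecidablePred (· ∈ centralizer (Q : Set G))]
    (hQ : IsPGroup p Q) {f : G → R}
    (hf : ∀ g ∈ Q, ∀ h, f (g * h * g⁻¹) = f h) :
    ∑ h, f h = ∑ h with h ∈ centralizer (Q : Set G), f h := by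
  classical
  let P := Q.comap (ConjAct.ofConjAct : ConjAct G ≃* G).toMonoidHom
  have hP : IsPGroup p P := hQ.comap_of_injective _ ConjAct.ofConjAct.injective
  have hfix : ∀ h, h ∈ MulAction.fixedPoints P G ↔ h ∈ centralizer (Q : Set G) := by
    intro h
    simp only [MulAction.mem_fixedPoints, Subtype.forall, Subgroup.mk_smul, P, Subgroup.mem_comap,
      ConjAct.forall, ConjAct.toConjAct_smul, MulEquiv.coe_toMonoidHom, ConjAct.ofConjAct_toConjAct,
      mem_centralizer_iff, SetLike.mem_coe, mul_inv_eq_iff_eq_mul]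
  rw [IsPGroup.sum_eq_sum_fixedPoints hP fun c h => by
    simpa [Subgroup.smul_def, ConjAct.smul_def] using hf (ConjAct.ofConjAct c) c.2 h]
  exact Finset.sum_congr (Finset.filter_congr fun h _ => hfix h) fun _ _ => rfl

namespace MonoidAlgebra

theorem mem_center_iff_coeff_conj {R G : Type*} [CommRing R] [Group G] {x : MonoidAlgebra R G} :
    x ∈ Subring.center (MonoidAlgebra R G) ↔ ∀ g h, x.coeff (g * h * g⁻¹) = x.coeff h := by
  refine ⟨fun hx g h => ?_, fun hx => Subring.mem_center_iff.mpr fun y => ?_⟩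
  · have := congr_arg (coeff · (g * h)) (Subring.mem_center_iff.mp hx (single g 1))
    simpa using this.symm
  · induction y using MonoidAlgebra.induction_linear with
    | zero => simp
    | add y y' hy hy' => rw [add_mul, mul_add, hy, hy']
    | single g r =>
      ext w
      rw [coeff_single_mul_apply, coeff_mul_single_apply, mul_comm]
      congr 1
      simpa [mul_assoc] using hx g⁻¹ (w * g⁻¹)

theorem coeff_mul_eq_sum {R G : Type*} [Semiring R] [Group G] [Fintype G]
    (x y : MonoidAlgebra R G) (h : G) : (x * y).coeff h = ∑ u, x.coeff u * y.coeff (u⁻¹ * h) := by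
  rw [coeff_mul_apply_left, Finsupp.sum_fintype _ _ fun _ => zero_mul _]

variable {R G : Type*} [Semiring R] [Group G] {X : Subgroup G}

theorem coeff_mapDomainRingHom_subtype (y : MonoidAlgebra R X) (n : X) :
    (mapDomainRingHom R X.subtype y).coeff n = y.coeff n :=
  Finsupp.mapDomain_apply Subtype.val_injective _ n

theorem mapDomainRingHom_subtype_injective :
    Function.Injective (mapDomainRingHom R X.subtype) :=
  mapDomain_injective Subtype.val_injective

theorem exists_mapDomainRingHom_subtype_eq {z : MonoidAlgebra R G}
    (hz : ∀ h, z.coeff h ≠ 0 → h ∈ X) : ∃ y, mapDomainRingHom R X.subtype y = z :=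
  ⟨comapDomain _ Subtype.val_injective z,
    mapDomain_comapDomain (fun h hh => ⟨⟨h, hz h (Finsupp.mem_support_iff.mp hh)⟩, rfl⟩) _⟩

end MonoidAlgebra

omit [Group H] in
theorem coeff_truncate (s : Set H) [DecidablePred (· ∈ s)] (x : MonoidAlgebra k H) (h : H) :
    (truncate s x).coeff h = if h ∈ s then x.coeff h else 0 := by
  simp only [truncate, MonoidAlgebra.coeff_ofCoeff, Finsupp.filter_apply]
  congr

theorem coeff_Br (Q : Subgroup H) [DecidablePred (· ∈ Subgroup.centralizer (Q : Set H))]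
    (x : MonoidAlgebra k H) (h : H) :
    (Br Q x).coeff h = if h ∈ Subgroup.centralizer (Q : Set H) then x.coeff h else 0 :=
  coeff_truncate _ x h

theorem coeff_Br_conj {Q : Subgroup H} {x : MonoidAlgebra k H}
    (hx : x ∈ Subring.center (MonoidAlgebra k H)) {g : H}
    (hg : g ∈ Subgroup.normalizer (Q : Set H)) (h : H) :
    (Br Q x).coeff (g * h * g⁻¹) = (Br Q x).coeff h := by
  classical
  rw [coeff_Br, coeff_Br, Subgroup.conj_mem_centralizer_iff hg,
    MonoidAlgebra.mem_center_iff_coeff_conj.mp hx]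

theorem mem_centralizer_of_coeff_Br_ne_zero {Q : Subgroup H} {x : MonoidAlgebra k H} {h : H}
    (hh : (Br Q x).coeff h ≠ 0) : h ∈ Subgroup.centralizer (Q : Set H) := by
  classical
  by_contra hC
  exact hh (by rw [coeff_Br, if_neg hC])

theorem aug_eq_lift (x : MonoidAlgebra k H) : aug x = MonoidAlgebra.lift k k H 1 x := by
  simp [aug, MonoidAlgebra.lift_apply]

omit [Group H] in
theorem aug_eq_sum [Fintype H] (x : MonoidAlgebra k H) : aug x = ∑ h, x.coeff h :=
  Finsupp.sum_fintype _ _ fun _ => rfl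

theorem aug_mapDomainRingHom {G : Type*} [Group G] (f : G →* H) (y : MonoidAlgebra k G) :
    aug (MonoidAlgebra.mapDomainRingHom k f y) = aug y :=
  Finsupp.sum_mapDomain_index (fun _ => rfl) fun _ _ _ => rfl

section BrauerMorphism

variable {p : ℕ} [Fact p.Prime] [CharP k p] [Finite H] {Q : Subgroup H}

theorem aug_Br (hQ : IsPGroup p Q) {x : MonoidAlgebra k H}
    (hx : ∀ g ∈ Q, ∀ h, x.coeff (g * h * g⁻¹) = x.coeff h) : aug (Br Q x) = aug x := by
  classical
  have := Fintype.ofFinite H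
  simp only [aug_eq_sum, coeff_Br, Q.sum_eq_sum_centralizer hQ hx, Finset.sum_filter]

theorem Br_mul (hQ : IsPGroup p Q) {x y : MonoidAlgebra k H}
    (hx : ∀ g ∈ Q, ∀ h, x.coeff (g * h * g⁻¹) = x.coeff h)
    (hy : ∀ g ∈ Q, ∀ h, y.coeff (g * h * g⁻¹) = y.coeff h) :
    Br Q (x * y) = Br Q x * Br Q y := by
  classical
  have := Fintype.ofFinite H
  ext h
  simp only [coeff_Br, MonoidAlgebra.coeff_mul_eq_sum]
  split_ifs with hh
  · have hinv : ∀ g ∈ Q, ∀ u, x.coeff (g * u * g⁻¹) * y.coeff ((g * u * g⁻¹)⁻¹ * h)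
        = x.coeff u * y.coeff (u⁻¹ * h) := by
      intro g hg u
      have hgh : Commute g h := Subgroup.mem_centralizer_iff.mp hh g hg
      have : (g * u * g⁻¹)⁻¹ * h = g * (u⁻¹ * h) * g⁻¹ := by
        simp only [mul_inv_rev, inv_inv, mul_assoc, hgh.inv_left.eq]
      rw [this, hx g hg, hy g hg]
    rw [Q.sum_eq_sum_centralizer hQ hinv, Finset.sum_filter]
    refine Finset.sum_congr rfl fun u _ => ?_
    by_cases hu : u ∈ Subgroup.centralizer (Q : Set H)
    · rw [if_pos hu, if_pos hu, if_pos (Subgroup.mul_mem _ (Subgroup.inv_mem _ hu) hh)]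
    · rw [if_neg hu, if_neg hu, zero_mul]
  · refine (Finset.sum_eq_zero fun u _ => ?_).symm
    by_cases hu : u ∈ Subgroup.centralizer (Q : Set H)
    · rw [if_pos hu, if_neg fun hv => hh (by simpa using Subgroup.mul_mem _ hu hv), mul_zero]
    · rw [if_neg hu, zero_mul]

theorem isIdempotentElem_Br (hQ : IsPGroup p Q) {b : MonoidAlgebra k H}
    (hb : b ∈ Subring.center (MonoidAlgebra k H)) (hbi : IsIdempotentElem b) :
    IsIdempotentElem (Br Q b) := by
  have hinv : ∀ g ∈ Q, ∀ h, b.coeff (g * h * g⁻¹) = b.coeff h :=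
    fun g _ => MonoidAlgebra.mem_center_iff_coeff_conj.mp hb g
  rw [IsIdempotentElem, ← Br_mul hQ hinv hinv, hbi.eq]

end BrauerMorphism

theorem IsBlockIdem.mul_eq_self_of_map_eq_one {R S F : Type*} [Ring R] [Ring S] [Nontrivial S]
    [FunLike F R S] [RingHomClass F R S] (χ : F) {b z : R} (hb : IsBlockIdem b)
    (hz : z ∈ Subring.center R) (hzi : IsIdempotentElem z) (hχz : χ z = 1) (hχb : χ b = 1) :
    z * b = b := by
  obtain ⟨hbc, hbi, -, hprim⟩ := hb
  have hzb : Commute z b := (Subring.mem_center_iff.mp hz b).symm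
  have hzb' : Commute (1 - z) b := (Commute.one_left b).sub_left hzb
  rcases hprim (z * b) ((1 - z) * b) (Subring.mul_mem _ hz hbc)
      (Subring.mul_mem _ (Subring.sub_mem _ (Subring.one_mem _) hz) hbc)
      (hzi.mul_of_commute hzb hbi) (hzi.one_sub.mul_of_commute hzb' hbi)
      (by rw [hzb'.symm.mul_mul_mul_comm, hzi.mul_one_sub_self, zero_mul])
      (by rw [← add_mul, add_sub_cancel, one_mul]) with h | h
  · simpa [hχz, hχb] using congr_arg χ h
  · rwa [sub_mul, one_mul, sub_eq_zero, eq_comm] at h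

theorem Br_mul_eq_self_of_isBlockOf {p : ℕ} [Fact p.Prime] [CharP k p] [Finite H]
    {Q X : Subgroup H} (hQ : IsPGroup p Q) (hXN : X ≤ Subgroup.normalizer (Q : Set H))
    (hCX : Subgroup.centralizer (Q : Set H) ≤ X) {b e : MonoidAlgebra k H} (hb : IsBlockIdem b)
    (hba : aug b = 1) (he : IsBlockOf X e) (hea : aug e = 1) : Br Q b * e = e := by
  obtain ⟨e, he, rfl⟩ := he
  obtain ⟨z, hz⟩ := MonoidAlgebra.exists_mapDomainRingHom_subtype_eq (X := X)
    fun h hh => hCX (mem_centralizer_of_coeff_Br_ne_zero (x := b) hh)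
  have hzc : z ∈ Subring.center (MonoidAlgebra k X) := by
    refine MonoidAlgebra.mem_center_iff_coeff_conj.mpr fun g n => ?_
    rw [← MonoidAlgebra.coeff_mapDomainRingHom_subtype,
      ← MonoidAlgebra.coeff_mapDomainRingHom_subtype, hz]
    exact coeff_Br_conj hb.1 (hXN g.2) n
  have hzi : IsIdempotentElem z :=
    MonoidAlgebra.mapDomainRingHom_subtype_injective <| by
      rw [map_mul, hz, isIdempotentElem_Br hQ hb.1 hb.2.1]
  have hza : MonoidAlgebra.lift k k X 1 z = 1 := by
    rw [← aug_eq_lift, ← aug_mapDomainRingHom X.subtype, hz, aug_Br hQ, hba]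
    exact fun g _ => MonoidAlgebra.mem_center_iff_coeff_conj.mp hb.1 g
  have hea' : MonoidAlgebra.lift k k X 1 e = 1 := by
    rwa [← aug_eq_lift, ← aug_mapDomainRingHom X.subtype]
  rw [← hz, ← map_mul, he.mul_eq_self_of_map_eq_one _ hzc hzi hza hea']

theorem brauer_third_main_general
    (p : ℕ) [Fact p.Prime] (k : Type*) [Field k] [CharP k p]
    (H : Type*) [Group H] [Finite H] (Q : Subgroup H) (hQ : IsPGroup p Q)
    (b₀ e₀ f₀ : MonoidAlgebra k H)
    (hb₀ : IsBlockIdem b₀ ∧ aug b₀ = 1)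
    (he₀ : IsBlockOf (Subgroup.normalizer (Q : Set H)) e₀ ∧ aug e₀ = 1)
    (hf₀ : IsBlockOf (Subgroup.centralizer (Q : Set H)) f₀ ∧ aug f₀ = 1) :
    Br Q b₀ * e₀ = e₀ ∧ Br Q b₀ * f₀ = f₀ :=
  ⟨Br_mul_eq_self_of_isBlockOf hQ le_rfl (Subgroup.centralizer_le_normalizer _) hb₀.1 hb₀.2
      he₀.1 he₀.2,
    Br_mul_eq_self_of_isBlockOf hQ (Subgroup.centralizer_le_normalizer _) le_rfl hb₀.1 hb₀.2
      hf₀.1 hf₀.2⟩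

/-- Brauer's Third Main Theorem. The principal block of a group algebra is the
unique block on which the augmentation map takes the value `1`. Blocks of `k[N_H(Q)]` and of
`k[C_H(Q)]` are viewed inside `k[H]`, and the products `Br_Q(b₀)·e₀` and `Br_Q(b₀)·f₀`
(which take place in `k[N_H(Q)]` resp. `k[C_H(Q)]`) are computed in `k[H]`. -/
theorem brauer_third_main
    (p : ℕ) [Fact p.Prime] (k : Type*) [Field k] [IsAlgClosed k] [CharP k p]
    (H : Type*) [Group H] [Finite H] (Q : Subgroup H) (hQ : IsPGroup p Q)
    (b₀ e₀ f₀ : MonoidAlgebra k H)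
    (hb₀ : IsBlockIdem b₀ ∧ aug b₀ = 1)
    (he₀ : IsBlockOf (Subgroup.normalizer (Q : Set H)) e₀ ∧ aug e₀ = 1)
    (hf₀ : IsBlockOf (Subgroup.centralizer (Q : Set H)) f₀ ∧ aug f₀ = 1) :
    Br Q b₀ * e₀ = e₀ ∧ Br Q b₀ * f₀ = f₀ :=
  brauer_third_main_general p k H Q hQ b₀ e₀ f₀ hb₀ he₀ hf₀
end

section
/- Assume Hypothesis (1). Let V be a left E-submodule of the left regular module E; equivalently, identifying E with End_A(Y) as sets, V is an F-subspace of End_A(Y) such that v ∘ e ∈ V for all v ∈ V and e ∈ End_A(Y). Let V·Y := ∑_{f ∈ V} f(Y), an A-submodule of Y. Then {g ∈ End_A(Y) : g(Y) ⊆ V·Y} = V; equivalently, the image of the natural inclusion Hom_A(Y, V·Y) → Hom_A(Y, Y) = E equals V. -/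
/-!
Write `E = End_A(Y)`. Since `E` is finite-dimensional and `λ(x e)` is a left-nondegenerate
pairing on `E`, every functional on `E` is `y ↦ λ(x y)` for some `x`. If `g ∉ V`, take a
functional vanishing on `V` but not at `g`, and the corresponding `x`: then `λ(x v E) = 0` for
`v ∈ V` since `V` is closed under right multiplication, so `x v = 0` and `x` kills `V·Y`, while
`x g ≠ 0`. Hence `g(Y) ⊄ V·Y`.
-/

open LinearMap

section NondegenerateFunctional

variable {F R : Type*} [Field F] [Ring R] [Algebra F R] [FiniteDimensional F R]

theorem exists_forall_apply_mul_eq (lam : R →ₗ[F] F)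
    (hlam : ∀ x : R, x ≠ 0 → ∃ e, lam (x * e) ≠ 0) (φ : Module.Dual F R) :
    ∃ x : R, ∀ y, lam (x * y) = φ y := by
  let B : R →ₗ[F] Module.Dual F R := (LinearMap.mul F R).compr₂ lam
  have hB : Function.Injective B := by
    refine (injective_iff_map_eq_zero B).mpr fun x hx => ?_
    by_contra hx0
    obtain ⟨e, he⟩ := hlam x hx0
    exact he (LinearMap.congr_fun hx e)
  obtain ⟨x, hx⟩ :=
    (injective_iff_surjective_of_finrank_eq_finrank Subspace.dual_finrank_eq.symm).mp hB φ
  exact ⟨x, LinearMap.congr_fun hx⟩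

theorem exists_mul_eq_zero_and_mul_ne_zero_of_notMem (lam : R →ₗ[F] F)
    (hlam : ∀ x : R, x ≠ 0 → ∃ e, lam (x * e) ≠ 0) {V : Submodule F R}
    (hV : ∀ v ∈ V, ∀ e, v * e ∈ V) {g : R} (hg : g ∉ V) :
    ∃ x : R, (∀ v ∈ V, x * v = 0) ∧ x * g ≠ 0 := by
  obtain ⟨φ, hφg, hφV⟩ := V.exists_dual_map_eq_bot_of_notMem hg inferInstance
  obtain ⟨x, hx⟩ := exists_forall_apply_mul_eq lam hlam φ
  refine ⟨x, fun v hv => ?_, fun hxg => hφg (by rw [← hx, hxg, map_zero])⟩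
  by_contra hxv
  obtain ⟨e, he⟩ := hlam _ hxv
  rw [mul_assoc, hx] at he
  exact he (le_ker_iff_map.mpr hφV (hV v hv e))

end NondegenerateFunctional

theorem Module.End.finiteDimensional_of_isScalarTower (F A Y : Type*) [Field F] [Ring A]
    [Algebra F A] [FiniteDimensional F A] [AddCommGroup Y] [Module F Y] [Module A Y]
    [IsScalarTower F A Y] [SMulCommClass A F Y] [Module.Finite A Y] :
    FiniteDimensional F (Module.End A Y) :=
  have : Module.Finite F Y := Module.Finite.trans A Y
  FiniteDimensional.of_injective (restrictScalarsₗ F A Y Y F) (restrictScalars_injective F)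

/-- under Hypothesis (1) (`lam`/`hlam` below), for an `E`-submodule `V` of
`E = End_A(Y)^op` (an `F`-subspace of `End_A(Y)` closed under precomposition), one has
`{g : g(Y) ⊆ V·Y} = V`, where `V·Y = ∑_{f ∈ V} f(Y)`. -/
theorem green_lemma_VY
    (F : Type*) [Field F] (A : Type*) [Ring A] [Algebra F A] [FiniteDimensional F A]
    (Y : Type*) [AddCommGroup Y] [Module F Y] [Module A Y]
    [IsScalarTower F A Y] [SMulCommClass A F Y] [Module.Finite A Y]
    (lam : (Y →ₗ[A] Y) →ₗ[F] F)
    (hlam : ∀ x : Y →ₗ[A] Y, x ≠ 0 →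
      (∃ e : Y →ₗ[A] Y, lam (x ∘ₗ e) ≠ 0) ∧ (∃ e : Y →ₗ[A] Y, lam (e ∘ₗ x) ≠ 0))
    (V : Submodule F (Y →ₗ[A] Y))
    (hV : ∀ v ∈ V, ∀ e : Y →ₗ[A] Y, v ∘ₗ e ∈ V) :
    ∀ g : Y →ₗ[A] Y,
      (LinearMap.range g ≤ ⨆ f ∈ V, LinearMap.range f) ↔ g ∈ V := by
  have := Module.End.finiteDimensional_of_isScalarTower F A Y
  intro g
  refine ⟨fun hrange => ?_, fun hg => le_iSup₂ (f := fun f (_ : f ∈ V) => range f) g hg⟩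
  by_contra hg
  obtain ⟨x, hxV, hxg⟩ :=
    exists_mul_eq_zero_and_mul_ne_zero_of_notMem lam (fun x hx => (hlam x hx).1) hV hg
  have hVY : (⨆ f ∈ V, range f) ≤ ker x :=
    iSup₂_le fun v hv => range_le_ker_iff.mpr (hxV v hv)
  exact hxg (range_le_ker_iff.mp (hrange.trans hVY))
end

section
/- (Green) Assume Hypotheses (1) and (2). Then the assignment M ↦ Hom_A(Y, M) induces a bijection between the set of isomorphism classes of simple left A-modules and the set of isomorphism classes of simple left E-modules: for simple A-modules M and M′ one has Hom_A(Y, M) ≅ Hom_A(Y, M′) as E-modules if and only if M ≅ M′, and every simple left E-module is isomorphic to Hom_A(Y, M) for some simple left A-module M. -/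
section EModule

variable {A : Type*} [Ring A] {Y : Type*} [AddCommGroup Y] [Module A Y]
variable {M : Type*} [AddCommGroup M] [Module A M]

/-- For `E := End_A(Y)^op`, the space `H_Y(M) = Hom_A(Y, M)` is a left `E`-module via
`e · f := f ∘ e`. -/
instance homEModule : Module (Module.End A Y)ᵐᵒᵖ (Y →ₗ[A] M) where
  smul e f := f ∘ₗ e.unop
  one_smul f := LinearMap.comp_id f
  mul_smul e₁ e₂ f := by
    show f ∘ₗ (e₁ * e₂).unop = (f ∘ₗ e₂.unop) ∘ₗ e₁.unop
    rw [MulOpposite.unop_mul]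
    rfl
  smul_zero e := LinearMap.zero_comp e.unop
  smul_add e f g := LinearMap.add_comp e.unop g f
  add_smul e₁ e₂ f := by
    show f ∘ₗ (e₁ + e₂).unop = f ∘ₗ e₁.unop + f ∘ₗ e₂.unop
    rw [MulOpposite.unop_add]
    exact LinearMap.comp_add _ _ _
  zero_smul f := LinearMap.comp_zero f

end EModule

section GreenAux

open LinearMap Submodule Module

variable {F : Type} [Field F] {A : Type} [Ring A] [Algebra F A] [FiniteDimensional F A]
variable {Y : Type} [AddCommGroup Y] [Module F Y] [Module A Y]
variable [IsScalarTower F A Y] [SMulCommClass A F Y] [Module.Finite A Y]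

lemma green_op_smul_def {M : Type*} [AddCommGroup M] [Module A M]
    (e : (Module.End A Y)ᵐᵒᵖ) (f : Y →ₗ[A] M) : e • f = f ∘ₗ e.unop := rfl

lemma green_fd_Y (F A Y : Type) [Field F] [Ring A] [Algebra F A] [FiniteDimensional F A]
    [AddCommGroup Y] [Module F Y] [Module A Y] [IsScalarTower F A Y] [Module.Finite A Y] :
    FiniteDimensional F Y := Module.Finite.trans A Y

lemma green_fd_E (F A Y : Type) [Field F] [Ring A] [Algebra F A] [FiniteDimensional F A]
    [AddCommGroup Y] [Module F Y] [Module A Y] [IsScalarTower F A Y] [SMulCommClass A F Y]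
    [Module.Finite A Y] : FiniteDimensional F (Y →ₗ[A] Y) := by
  haveI : FiniteDimensional F Y := green_fd_Y F A Y
  exact FiniteDimensional.of_injective
    ({ toFun := fun f => f.restrictScalars F,
       map_add' := fun f g => rfl,
       map_smul' := fun c f => rfl } : (Y →ₗ[A] Y) →ₗ[F] (Y →ₗ[F] Y))
    (fun f g h => LinearMap.restrictScalars_injective F h)

lemma green_comp_smul (x y : Y →ₗ[A] Y) (c : F) :
    y ∘ₗ (c • x) = c • (y ∘ₗ x) :=
  LinearMap.ext fun v => y.map_smul_of_tower c (x v)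

noncomputable def greenPhiL (lam : (Y →ₗ[A] Y) →ₗ[F] F) :
    (Y →ₗ[A] Y) →ₗ[F] Module.Dual F (Y →ₗ[A] Y) :=
  LinearMap.mk₂ F (fun y x => lam (y ∘ₗ x))
    (fun y₁ y₂ x => by simp only [LinearMap.add_comp, map_add])
    (fun c y x => by simp only [LinearMap.smul_comp, map_smul])
    (fun y x₁ x₂ => by simp only [LinearMap.comp_add, map_add])
    (fun c y x => by simp only [green_comp_smul, map_smul])

noncomputable def greenPhiR (lam : (Y →ₗ[A] Y) →ₗ[F] F) :
    (Y →ₗ[A] Y) →ₗ[F] Module.Dual F (Y →ₗ[A] Y) :=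
  LinearMap.mk₂ F (fun y x => lam (x ∘ₗ y))
    (fun y₁ y₂ x => by simp only [LinearMap.comp_add, map_add])
    (fun c y x => by simp only [green_comp_smul, map_smul])
    (fun y x₁ x₂ => by simp only [LinearMap.add_comp, map_add])
    (fun c y x => by simp only [LinearMap.smul_comp, map_smul])

noncomputable def greenPerpL (lam : (Y →ₗ[A] Y) →ₗ[F] F)
    (L : Submodule F (Y →ₗ[A] Y)) : Submodule F (Y →ₗ[A] Y) :=
  L.dualAnnihilator.comap (greenPhiL lam)

noncomputable def greenPerpR (lam : (Y →ₗ[A] Y) →ₗ[F] F)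
    (L : Submodule F (Y →ₗ[A] Y)) : Submodule F (Y →ₗ[A] Y) :=
  L.dualAnnihilator.comap (greenPhiR lam)

lemma green_mem_perpL {lam : (Y →ₗ[A] Y) →ₗ[F] F} {L : Submodule F (Y →ₗ[A] Y)}
    {y : Y →ₗ[A] Y} : y ∈ greenPerpL lam L ↔ ∀ x ∈ L, lam (y ∘ₗ x) = 0 := by
  simp only [greenPerpL, Submodule.mem_comap, Submodule.mem_dualAnnihilator, greenPhiL,
    LinearMap.mk₂_apply]

lemma green_mem_perpR {lam : (Y →ₗ[A] Y) →ₗ[F] F} {L : Submodule F (Y →ₗ[A] Y)}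
    {y : Y →ₗ[A] Y} : y ∈ greenPerpR lam L ↔ ∀ x ∈ L, lam (x ∘ₗ y) = 0 := by
  simp only [greenPerpR, Submodule.mem_comap, Submodule.mem_dualAnnihilator, greenPhiR,
    LinearMap.mk₂_apply]

lemma green_finrank_perp_core {V : Type*} [AddCommGroup V] [Module F V] [FiniteDimensional F V]
    (Φ : V →ₗ[F] Module.Dual F V) (hΦ : Function.Injective Φ) (L : Submodule F V) :
    finrank F (L.dualAnnihilator.comap Φ) + finrank F L = finrank F V := by
  have hsurj : Function.Surjective Φ :=
    (LinearMap.injective_iff_surjective_of_finrank_eq_finrank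
      (Subspace.dual_finrank_eq (K := F) (V := V)).symm).mp hΦ
  let e : V ≃ₗ[F] Module.Dual F V := LinearEquiv.ofBijective Φ ⟨hΦ, hsurj⟩
  have h1 : L.dualAnnihilator.comap Φ = L.dualAnnihilator.map (e.symm : Module.Dual F V →ₗ[F] V) := by
    rw [← Submodule.comap_equiv_eq_map_symm]
    rfl
  rw [h1, LinearEquiv.finrank_map_eq]
  have h2 : finrank F L.dualAnnihilator = finrank F (V ⧸ L) :=
    (LinearEquiv.finrank_eq (Subspace.quotEquivAnnihilator L)).symm
  rw [h2]
  exact Submodule.finrank_quotient_add_finrank L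


variable (lam : (Y →ₗ[A] Y) →ₗ[F] F)
variable (hlam : ∀ x : Y →ₗ[A] Y, x ≠ 0 →
      (∃ e : Y →ₗ[A] Y, lam (x ∘ₗ e) ≠ 0) ∧ (∃ e : Y →ₗ[A] Y, lam (e ∘ₗ x) ≠ 0))

include lam hlam

lemma green_finrank_perpL (L : Submodule F (Y →ₗ[A] Y)) :
    finrank F (greenPerpL lam L) + finrank F L = finrank F (Y →ₗ[A] Y) := by
  haveI := green_fd_E F A Y
  refine green_finrank_perp_core (greenPhiL lam) ?_ L
  rw [← LinearMap.ker_eq_bot]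
  refine (Submodule.eq_bot_iff _).mpr fun y hy => ?_
  by_contra h0
  obtain ⟨e, he⟩ := (hlam y h0).1
  apply he
  have := LinearMap.congr_fun (LinearMap.mem_ker.mp hy) e
  simpa [greenPhiL] using this

lemma green_finrank_perpR (L : Submodule F (Y →ₗ[A] Y)) :
    finrank F (greenPerpR lam L) + finrank F L = finrank F (Y →ₗ[A] Y) := by
  haveI := green_fd_E F A Y
  refine green_finrank_perp_core (greenPhiR lam) ?_ L
  rw [← LinearMap.ker_eq_bot]
  refine (Submodule.eq_bot_iff _).mpr fun y hy => ?_
  by_contra h0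
  obtain ⟨e, he⟩ := (hlam y h0).2
  apply he
  have := LinearMap.congr_fun (LinearMap.mem_ker.mp hy) e
  simpa [greenPhiR] using this

/-- The generation lemma: any nonzero `f : Y →ₗ[A] M` generates `Hom_A(Y, M)` over `E`. -/
lemma green_gen {M : Type*} [AddCommGroup M] [Module A M] (hM : IsSimpleModule A M)
    (ι : M →ₗ[A] Y) (hι : Function.Injective ι)
    (f g : Y →ₗ[A] M) (hf : f ≠ 0) : ∃ e : Y →ₗ[A] Y, g = f ∘ₗ e := by
  haveI := green_fd_E F A Y
  have hfs : Function.Surjective f := by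
    rcases eq_bot_or_eq_top (LinearMap.range f) with h | h
    · exact absurd (LinearMap.range_eq_bot.mp h) hf
    · exact LinearMap.range_eq_top.mp h
  set x : Y →ₗ[A] Y := ι ∘ₗ f with hxdef
  let lc : (Y →ₗ[A] Y) →ₗ[F] (Y →ₗ[A] Y) :=
    { toFun := fun e => x ∘ₗ e
      map_add' := fun a b => by simp only [LinearMap.comp_add]
      map_smul' := fun c a => by simp only [green_comp_smul, RingHom.id_apply] }
  let J : Submodule F (Y →ₗ[A] Y) :=
    { carrier := {h | LinearMap.range h ≤ LinearMap.range ι}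
      add_mem' := by
        intro a b ha hb z hz
        obtain ⟨v, rfl⟩ := LinearMap.mem_range.mp hz
        rw [LinearMap.add_apply]
        exact add_mem (ha (LinearMap.mem_range_self a v)) (hb (LinearMap.mem_range_self b v))
      zero_mem' := by
        intro z hz
        obtain ⟨v, rfl⟩ := LinearMap.mem_range.mp hz
        simp
      smul_mem' := by
        intro c h hh z hz
        obtain ⟨v, rfl⟩ := LinearMap.mem_range.mp hz
        rw [LinearMap.smul_apply]
        exact (LinearMap.range ι).smul_of_tower_mem c (hh (LinearMap.mem_range_self h v)) }
  have hxEJ : LinearMap.range lc ≤ J := by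
    rintro z hz
    obtain ⟨e, rfl⟩ := LinearMap.mem_range.mp hz
    show LinearMap.range (x ∘ₗ e) ≤ LinearMap.range ι
    refine le_trans (LinearMap.range_comp_le_range e x) ?_
    rw [hxdef]
    exact LinearMap.range_comp_le_range f ι
  have hperp : greenPerpL lam (LinearMap.range lc) = greenPerpL lam J := by
    refine le_antisymm ?_ ?_
    · intro y hy
      rw [green_mem_perpL] at hy ⊢
      -- first: y ∘ₗ x = 0
      have h2 : y ∘ₗ x = 0 := by
        by_contra h0
        obtain ⟨e, he⟩ := (hlam _ h0).1
        apply he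
        have := hy (x ∘ₗ e) ⟨e, rfl⟩
        rwa [← LinearMap.comp_assoc] at this
      have h3 : y ∘ₗ ι = 0 := by
        ext m
        obtain ⟨v, rfl⟩ := hfs m
        have := LinearMap.congr_fun h2 v
        simpa [hxdef] using this
      intro h hh
      have hyh : y ∘ₗ h = 0 := by
        ext v
        obtain ⟨m, hm⟩ := LinearMap.mem_range.mp (hh (LinearMap.mem_range_self h v))
        have := LinearMap.congr_fun h3 m
        simp only [LinearMap.comp_apply, LinearMap.zero_apply] at this ⊢
        rw [← hm, this]
      rw [hyh, map_zero]
    · intro y hy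
      rw [green_mem_perpL] at hy ⊢
      intro z hz
      exact hy z (hxEJ hz)
  have hfr : finrank F (LinearMap.range lc) = finrank F J := by
    have a := green_finrank_perpL lam hlam (LinearMap.range lc)
    have b := green_finrank_perpL lam hlam J
    rw [hperp] at a
    omega
  have hEq : LinearMap.range lc = J := Submodule.eq_of_le_of_finrank_eq hxEJ hfr
  have hgJ : ι ∘ₗ g ∈ J := LinearMap.range_comp_le_range g ι
  rw [← hEq] at hgJ
  obtain ⟨e, he⟩ := LinearMap.mem_range.mp hgJ
  refine ⟨e, ?_⟩
  ext v
  apply hι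
  have := LinearMap.congr_fun he v
  simpa [hxdef, lc] using this.symm

/-- `Hom_A(Y, M)` is a simple `E`-module for simple `M` embedded in and covered by `Y`. -/
lemma green_H_simple {M : Type*} [AddCommGroup M] [Module A M] (hM : IsSimpleModule A M)
    (ι : M →ₗ[A] Y) (hι : Function.Injective ι)
    (π : Y →ₗ[A] M) (hπ : Function.Surjective π) :
    IsSimpleModule (Module.End A Y)ᵐᵒᵖ (Y →ₗ[A] M) := by
  have hπ0 : π ≠ 0 := by
    intro h
    haveI := IsSimpleModule.nontrivial A M
    obtain ⟨m, hm⟩ := exists_ne (0 : M)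
    obtain ⟨v, rfl⟩ := hπ m
    rw [h] at hm
    exact hm rfl
  haveI : Nontrivial (Submodule (Module.End A Y)ᵐᵒᵖ (Y →ₗ[A] M)) := by
    refine ⟨⊥, ⊤, fun h => hπ0 ?_⟩
    have : π ∈ (⊥ : Submodule (Module.End A Y)ᵐᵒᵖ (Y →ₗ[A] M)) := by rw [h]; trivial
    simpa using this
  refine { toIsSimpleOrder := ⟨fun N => ?_⟩ }
  rcases eq_or_ne N ⊥ with hN | hN
  · exact Or.inl hN
  · refine Or.inr (eq_top_iff.mpr fun g _ => ?_)
    obtain ⟨f, hfN, hf⟩ := (Submodule.ne_bot_iff N).mp hN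
    obtain ⟨e, he⟩ := green_gen lam hlam hM ι hι f g hf
    have : g = (MulOpposite.op e) • f := he
    rw [this]
    exact N.smul_mem _ hfN

/-- Same right annihilator implies same left ideal: Frobenius double-perp argument. -/
lemma green_eq_Ex (x x' : Y →ₗ[A] Y)
    (h : ∀ e : Y →ₗ[A] Y, x ∘ₗ e = 0 ↔ x' ∘ₗ e = 0) :
    ∃ u : Y →ₗ[A] Y, x' = u ∘ₗ x := by
  haveI := green_fd_E F A Y
  let lcomp : (Y →ₗ[A] Y) → (Y →ₗ[A] Y) →ₗ[F] (Y →ₗ[A] Y) := fun w =>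
    { toFun := fun e => w ∘ₗ e
      map_add' := fun a b => by simp only [LinearMap.comp_add]
      map_smul' := fun c a => by simp only [green_comp_smul, RingHom.id_apply] }
  let rcomp : (Y →ₗ[A] Y) → (Y →ₗ[A] Y) →ₗ[F] (Y →ₗ[A] Y) := fun w =>
    { toFun := fun e => e ∘ₗ w
      map_add' := fun a b => by simp only [LinearMap.add_comp]
      map_smul' := fun c a => by simp only [LinearMap.smul_comp, RingHom.id_apply] }
  have key : ∀ w : Y →ₗ[A] Y, LinearMap.range (rcomp w) = greenPerpL lam (LinearMap.ker (lcomp w)) := by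
    intro w
    have h1 : greenPerpR lam (LinearMap.range (rcomp w)) = LinearMap.ker (lcomp w) := by
      ext y
      rw [green_mem_perpR, LinearMap.mem_ker]
      constructor
      · intro hy
        show w ∘ₗ y = 0
        by_contra h0
        obtain ⟨e, he⟩ := (hlam _ h0).2
        apply he
        have := hy (e ∘ₗ w) ⟨e, rfl⟩
        rwa [LinearMap.comp_assoc] at this
      · intro hy z hz
        obtain ⟨e, rfl⟩ := LinearMap.mem_range.mp hz
        show lam ((e ∘ₗ w) ∘ₗ y) = 0
        rw [LinearMap.comp_assoc, show w ∘ₗ y = 0 from hy, LinearMap.comp_zero, map_zero]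
    have h2 : LinearMap.range (rcomp w) ≤ greenPerpL lam (LinearMap.ker (lcomp w)) := by
      rintro z hz
      obtain ⟨e, rfl⟩ := LinearMap.mem_range.mp hz
      rw [green_mem_perpL]
      intro z hzk
      show lam ((e ∘ₗ w) ∘ₗ z) = 0
      rw [LinearMap.comp_assoc, show w ∘ₗ z = 0 from hzk, LinearMap.comp_zero, map_zero]
    refine Submodule.eq_of_le_of_finrank_eq h2 ?_
    have a := green_finrank_perpR lam hlam (LinearMap.range (rcomp w))
    have b := green_finrank_perpL lam hlam (LinearMap.ker (lcomp w))
    rw [h1] at a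
    omega
  have hker : LinearMap.ker (lcomp x) = LinearMap.ker (lcomp x') := by
    ext e
    exact (h e)
  have : LinearMap.range (rcomp x') = LinearMap.range (rcomp x) := by
    rw [key, key, hker]
  have hx' : x' ∈ LinearMap.range (rcomp x') := ⟨LinearMap.id, LinearMap.id_comp x'⟩
  rw [this] at hx'
  obtain ⟨u, hu⟩ := LinearMap.mem_range.mp hx'
  exact ⟨u, hu.symm⟩

end GreenAux

/-- A nonzero map into a simple module is surjective. -/
lemma green_surj_of_ne_zero {R X N : Type*} [Ring R] [AddCommGroup X] [Module R X]
    [AddCommGroup N] [Module R N] (hN : IsSimpleModule R N)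
    (f : X →ₗ[R] N) (hf : f ≠ 0) : Function.Surjective f := by
  rcases eq_bot_or_eq_top (LinearMap.range f) with h | h
  · exact absurd (LinearMap.range_eq_bot.mp h) hf
  · exact LinearMap.range_eq_top.mp h

/-- If two maps out of `X` into simple modules satisfy `ker φ ≤ ker ψ` with `ψ ≠ 0`,
then the simple targets are isomorphic. -/
lemma green_simple_iso_of_factor {R X T V : Type*} [Ring R] [AddCommGroup X] [Module R X]
    [AddCommGroup T] [Module R T] [AddCommGroup V] [Module R V]
    (hT : IsSimpleModule R T) (hV : IsSimpleModule R V)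
    (φ : X →ₗ[R] T) (ψ : X →ₗ[R] V) (hker : LinearMap.ker φ ≤ LinearMap.ker ψ)
    (hψ : ψ ≠ 0) : Nonempty (V ≃ₗ[R] T) := by
  have hφ0 : φ ≠ 0 := by
    intro h
    apply hψ
    have : LinearMap.ker φ = ⊤ := by rw [h]; exact LinearMap.ker_zero
    rw [← LinearMap.ker_eq_top]
    exact eq_top_iff.mpr (this ▸ hker)
  have hφs : Function.Surjective φ := green_surj_of_ne_zero hT φ hφ0
  have hψs : Function.Surjective ψ := green_surj_of_ne_zero hV ψ hψ
  have hkk : LinearMap.ker φ = LinearMap.ker ψ := by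
    refine le_antisymm hker ?_
    rcases eq_bot_or_eq_top ((LinearMap.ker ψ).map φ) with hmap | hmap
    · intro u hu
      have : φ u ∈ (LinearMap.ker ψ).map φ := Submodule.mem_map_of_mem hu
      rw [hmap, Submodule.mem_bot] at this
      exact LinearMap.mem_ker.mpr this
    · exfalso
      apply hψ
      ext z
      have : φ z ∈ (LinearMap.ker ψ).map φ := by rw [hmap]; trivial
      obtain ⟨u, hu, huz⟩ := Submodule.mem_map.mp this
      have hsub : z - u ∈ LinearMap.ker φ := by
        rw [LinearMap.mem_ker, map_sub, huz, sub_self]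
      have : z - u ∈ LinearMap.ker ψ := hker hsub
      have hz : z ∈ LinearMap.ker ψ := by
        have := add_mem this hu
        simpa using this
      simpa using hz
  exact ⟨(ψ.quotKerEquivOfSurjective hψs).symm.trans
    ((Submodule.quotEquivOfEq _ _ hkk.symm).trans (φ.quotKerEquivOfSurjective hφs))⟩




section GreenHW

variable {A : Type} [Ring A] {Y : Type} [AddCommGroup Y] [Module A Y]

/-- The `E`-submodule of `E = Hom_A(Y,Y)` of maps with range inside `W`. -/
def greenHW (W : Submodule A Y) : Submodule (Module.End A Y)ᵐᵒᵖ (Y →ₗ[A] Y) where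
  carrier := {f | LinearMap.range f ≤ W}
  add_mem' := by
    intro a b ha hb z hz
    obtain ⟨v, rfl⟩ := LinearMap.mem_range.mp hz
    rw [LinearMap.add_apply]
    exact add_mem (ha (LinearMap.mem_range_self a v)) (hb (LinearMap.mem_range_self b v))
  zero_mem' := by
    intro z hz
    obtain ⟨v, rfl⟩ := LinearMap.mem_range.mp hz
    simp
  smul_mem' := by
    intro e f hf z hz
    obtain ⟨v, rfl⟩ := LinearMap.mem_range.mp hz
    exact hf (LinearMap.mem_range_self f (e.unop v))

lemma green_mem_HW {W : Submodule A Y} {f : Y →ₗ[A] Y} :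
    f ∈ greenHW W ↔ LinearMap.range f ≤ W := Iff.rfl

end GreenHW

section GreenPart2

open LinearMap Submodule Module

variable {F : Type} [Field F] {A : Type} [Ring A] [Algebra F A] [FiniteDimensional F A]
variable {Y : Type} [AddCommGroup Y] [Module F Y] [Module A Y]
variable [IsScalarTower F A Y] [SMulCommClass A F Y] [Module.Finite A Y]
variable (lam : (Y →ₗ[A] Y) →ₗ[F] F)
variable (hlam : ∀ x : Y →ₗ[A] Y, x ≠ 0 →
      (∃ e : Y →ₗ[A] Y, lam (x ∘ₗ e) ≠ 0) ∧ (∃ e : Y →ₗ[A] Y, lam (e ∘ₗ x) ≠ 0))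

include lam hlam

lemma green_part2_aux
    (h2 : ∀ (M : Type) [AddCommGroup M] [Module A M], IsSimpleModule A M →
      (∃ N : Submodule A Y, Nonempty (M ≃ₗ[A] ↥N)) ∧
      (∃ N : Submodule A Y, Nonempty (M ≃ₗ[A] (Y ⧸ N))))
    (V : Type) [AddCommGroup V] [Module (Module.End A Y)ᵐᵒᵖ V]
    (hV : IsSimpleModule (Module.End A Y)ᵐᵒᵖ V)
    (ψ : (Y →ₗ[A] Y) →ₗ[(Module.End A Y)ᵐᵒᵖ] V) :
    ∀ (n : ℕ) (W : Submodule A Y), finrank F ↥(W.restrictScalars F) ≤ n →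
      Submodule.map ψ (greenHW W) ≠ ⊥ →
      ∃ M : ModuleCat.{0} A, IsSimpleModule A M ∧
        Nonempty (V ≃ₗ[(Module.End A Y)ᵐᵒᵖ] (Y →ₗ[A] M)) := by
  haveI : FiniteDimensional F Y := green_fd_Y F A Y
  have hbotcase : ∀ (W : Submodule A Y), W = ⊥ → Submodule.map ψ (greenHW W) = ⊥ := by
    intro W hW
    rw [hW]
    refine (Submodule.eq_bot_iff _).mpr ?_
    rintro z hz
    obtain ⟨f, hf, rfl⟩ := Submodule.mem_map.mp hz
    have hf0 : f = 0 := (LinearMap.range_le_bot_iff f).mp hf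
    rw [hf0, map_zero]
  intro n
  induction n with
  | zero =>
    intro W hfr hne
    exfalso
    apply hne
    apply hbotcase
    have h0 : finrank F ↥(W.restrictScalars F) = 0 := Nat.le_zero.mp hfr
    exact (Submodule.restrictScalars_eq_bot_iff F A Y).mp (Submodule.finrank_eq_zero.mp h0)
  | succ n IH =>
    intro W hfr hne
    rcases eq_or_ne W ⊥ with hWbot | hWbot
    · exact absurd (hbotcase W hWbot) hne
    · haveI : IsNoetherian A Y := isNoetherian_of_tower F (IsNoetherian.iff_fg.mpr inferInstance)
      obtain ⟨U, hUmem, hUmax⟩ := set_has_maximal_iff_noetherian.mpr inferInstance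
        {U : Submodule A Y | U < W} ⟨⊥, bot_lt_iff_ne_bot.mpr hWbot⟩
      have hUW : U < W := hUmem
      have hcov : U ⋖ W := ⟨hUW, fun {Z} hUZ hZW => hUmax Z hZW hUZ⟩
      have hS : IsSimpleModule A (↥W ⧸ Submodule.comap W.subtype U) :=
        (covBy_iff_quot_is_simple hUW.le).mp hcov
      by_cases hU : Submodule.map ψ (greenHW U) = ⊥
      · -- the simple head of `W` catches `V`
        obtain ⟨⟨N, ⟨eN⟩⟩, ⟨N', ⟨eQ⟩⟩⟩ := h2 (↥W ⧸ Submodule.comap W.subtype U) hS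
        have hι : Function.Injective (N.subtype ∘ₗ eN.toLinearMap) :=
          (Submodule.injective_subtype N).comp eN.injective
        have hπ : Function.Surjective (eQ.symm.toLinearMap ∘ₗ N'.mkQ) :=
          eQ.symm.surjective.comp (Submodule.mkQ_surjective N')
        have hT : IsSimpleModule (Module.End A Y)ᵐᵒᵖ (Y →ₗ[A] (↥W ⧸ Submodule.comap W.subtype U)) :=
          green_H_simple lam hlam hS (N.subtype ∘ₗ eN.toLinearMap) hι
            (eQ.symm.toLinearMap ∘ₗ N'.mkQ) hπ
        let p : ↥W →ₗ[A] (↥W ⧸ Submodule.comap W.subtype U) := (Submodule.comap W.subtype U).mkQ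
        let φ : ↥(greenHW W) →ₗ[(Module.End A Y)ᵐᵒᵖ] (Y →ₗ[A] (↥W ⧸ Submodule.comap W.subtype U)) :=
          { toFun := fun f => p ∘ₗ LinearMap.codRestrict W f.1
              (fun y => f.2 (LinearMap.mem_range_self f.1 y))
            map_add' := fun a b => by ext y; rfl
            map_smul' := fun e f => by ext y; rfl }
        let ψ' : ↥(greenHW W) →ₗ[(Module.End A Y)ᵐᵒᵖ] V := ψ ∘ₗ (greenHW W).subtype
        have hψ'0 : ψ' ≠ 0 := by
          obtain ⟨z, hzmem, hz0⟩ := (Submodule.ne_bot_iff _).mp hne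
          obtain ⟨f, hf, rfl⟩ := Submodule.mem_map.mp hzmem
          intro hcontra
          apply hz0
          have := LinearMap.congr_fun hcontra ⟨f, hf⟩
          simpa [ψ'] using this
        have hker : LinearMap.ker φ ≤ LinearMap.ker ψ' := by
          intro f hfk
          rw [LinearMap.mem_ker] at hfk ⊢
          have hfU : f.1 ∈ greenHW U := by
            rintro z hz
            obtain ⟨v, rfl⟩ := LinearMap.mem_range.mp hz
            have h4 := LinearMap.congr_fun hfk v
            have h5 : Submodule.Quotient.mk (p := Submodule.comap W.subtype U)
                (LinearMap.codRestrict W f.1 (fun y => f.2 (LinearMap.mem_range_self f.1 y)) v) = 0 := h4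
            have hmem := (Submodule.Quotient.mk_eq_zero _).mp h5
            have h6 := Submodule.mem_comap.mp hmem
            simpa using h6
          have h7 : ψ f.1 ∈ Submodule.map ψ (greenHW U) := Submodule.mem_map_of_mem hfU
          rw [hU, Submodule.mem_bot] at h7
          simpa [ψ'] using h7
        obtain ⟨eiso⟩ := green_simple_iso_of_factor hT hV φ ψ' hker hψ'0
        exact ⟨ModuleCat.of A (↥W ⧸ Submodule.comap W.subtype U), hS, ⟨eiso⟩⟩
      · -- recurse into `U`
        have hle : U.restrictScalars F ≤ W.restrictScalars F := fun x hx => hUW.le hx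
        have hltr : U.restrictScalars F < W.restrictScalars F :=
          lt_of_le_of_ne hle (fun h => hUW.ne (Submodule.restrictScalars_injective F A Y h))
        have hlt : finrank F ↥(U.restrictScalars F) < finrank F ↥(W.restrictScalars F) :=
          Submodule.finrank_lt_finrank_of_lt hltr
        exact IH U (by omega) hU

end GreenPart2

/-- Green: under Hypotheses (1) (`lam`/`hlam`) and (2) (`h2`), the assignment
`M ↦ Hom_A(Y, M)` induces a bijection between isomorphism classes of simple `A`-modules and
isomorphism classes of simple `E`-modules, `E = End_A(Y)^op`. -/
theorem green_bijection_simples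
    (F : Type) [Field F] (A : Type) [Ring A] [Algebra F A] [FiniteDimensional F A]
    (Y : Type) [AddCommGroup Y] [Module F Y] [Module A Y]
    [IsScalarTower F A Y] [SMulCommClass A F Y] [Module.Finite A Y]
    (lam : (Y →ₗ[A] Y) →ₗ[F] F)
    (hlam : ∀ x : Y →ₗ[A] Y, x ≠ 0 →
      (∃ e : Y →ₗ[A] Y, lam (x ∘ₗ e) ≠ 0) ∧ (∃ e : Y →ₗ[A] Y, lam (e ∘ₗ x) ≠ 0))
    (h2 : ∀ (M : Type) [AddCommGroup M] [Module A M], IsSimpleModule A M →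
      (∃ N : Submodule A Y, Nonempty (M ≃ₗ[A] ↥N)) ∧
      (∃ N : Submodule A Y, Nonempty (M ≃ₗ[A] (Y ⧸ N)))) :
    (∀ (M M' : Type) [AddCommGroup M] [Module A M] [AddCommGroup M'] [Module A M'],
      IsSimpleModule A M → IsSimpleModule A M' →
      (Nonempty ((Y →ₗ[A] M) ≃ₗ[(Module.End A Y)ᵐᵒᵖ] (Y →ₗ[A] M')) ↔
        Nonempty (M ≃ₗ[A] M'))) ∧
    (∀ (V : Type) [AddCommGroup V] [Module (Module.End A Y)ᵐᵒᵖ V],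
      IsSimpleModule (Module.End A Y)ᵐᵒᵖ V →
      ∃ M : ModuleCat.{0} A, IsSimpleModule A M ∧
        Nonempty (V ≃ₗ[(Module.End A Y)ᵐᵒᵖ] (Y →ₗ[A] M))) := by
  constructor
  · intro M M' _ _ _ _ hM hM'
    constructor
    · rintro ⟨α⟩
      obtain ⟨⟨N, ⟨eN⟩⟩, ⟨Nq, ⟨eQ⟩⟩⟩ := h2 M hM
      obtain ⟨⟨N', ⟨eN'⟩⟩, -⟩ := h2 M' hM'
      set ι : M →ₗ[A] Y := N.subtype ∘ₗ eN.toLinearMap with hιdef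
      have hι : Function.Injective ι := (Submodule.injective_subtype N).comp eN.injective
      set ι' : M' →ₗ[A] Y := N'.subtype ∘ₗ eN'.toLinearMap with hι'def
      have hι' : Function.Injective ι' := (Submodule.injective_subtype N').comp eN'.injective
      set π : Y →ₗ[A] M := eQ.symm.toLinearMap ∘ₗ Nq.mkQ with hπdef
      have hπ : Function.Surjective π := eQ.symm.surjective.comp (Submodule.mkQ_surjective Nq)
      have hπ0 : π ≠ 0 := by
        intro h
        haveI := IsSimpleModule.nontrivial A M
        obtain ⟨m, hm⟩ := exists_ne (0 : M)
        obtain ⟨w, rfl⟩ := hπ m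
        rw [h] at hm
        exact hm rfl
      set π' : Y →ₗ[A] M' := α π with hπ'def
      have hπ'0 : π' ≠ 0 := by
        intro h
        apply hπ0
        exact α.map_eq_zero_iff.mp (hπ'def ▸ h)
      have hπ's : Function.Surjective π' := green_surj_of_ne_zero hM' π' hπ'0
      have c2 : ∀ e : Y →ₗ[A] Y, π ∘ₗ e = 0 ↔ π' ∘ₗ e = 0 := by
        intro e
        have h1 : π ∘ₗ e = (MulOpposite.op e) • π := rfl
        have h2' : π' ∘ₗ e = (MulOpposite.op e) • π' := rfl
        rw [h1, h2']
        constructor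
        · intro h
          rw [hπ'def, ← map_smul, h, map_zero]
        · intro h
          apply α.map_eq_zero_iff.mp
          rw [map_smul, ← hπ'def]
          exact h
      have key : ∀ e : Y →ₗ[A] Y, (ι ∘ₗ π) ∘ₗ e = 0 ↔ (ι' ∘ₗ π') ∘ₗ e = 0 := by
        intro e
        constructor
        · intro h0
          have hπe : π ∘ₗ e = 0 := by
            ext w
            apply hι
            have := LinearMap.congr_fun h0 w
            simpa using this
          have hπ'e : π' ∘ₗ e = 0 := (c2 e).mp hπe
          ext w
          have hz := LinearMap.congr_fun hπ'e w
          simp only [LinearMap.comp_apply, LinearMap.zero_apply] at hz ⊢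
          rw [hz, map_zero]
        · intro h0
          have hπ'e : π' ∘ₗ e = 0 := by
            ext w
            apply hι'
            have := LinearMap.congr_fun h0 w
            simpa using this
          have hπe : π ∘ₗ e = 0 := (c2 e).mpr hπ'e
          ext w
          have hz := LinearMap.congr_fun hπe w
          simp only [LinearMap.comp_apply, LinearMap.zero_apply] at hz ⊢
          rw [hz, map_zero]
      obtain ⟨u, hu⟩ := green_eq_Ex lam hlam (ι ∘ₗ π) (ι' ∘ₗ π') key
      obtain ⟨u', hu'⟩ := green_eq_Ex lam hlam (ι' ∘ₗ π') (ι ∘ₗ π) (fun e => (key e).symm)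
      have hkk : LinearMap.ker π = LinearMap.ker π' := by
        apply le_antisymm
        · intro w hw
          rw [LinearMap.mem_ker] at hw ⊢
          apply hι'
          have := LinearMap.congr_fun hu w
          simp only [LinearMap.comp_apply] at this
          rw [this, hw]
          simp
        · intro w hw
          rw [LinearMap.mem_ker] at hw ⊢
          apply hι
          have := LinearMap.congr_fun hu' w
          simp only [LinearMap.comp_apply] at this
          rw [this, hw]
          simp
      exact ⟨(π.quotKerEquivOfSurjective hπ).symm.trans
        ((Submodule.quotEquivOfEq _ _ hkk).trans (π'.quotKerEquivOfSurjective hπ's))⟩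
    · rintro ⟨β⟩
      refine ⟨LinearEquiv.ofLinear
        ({ toFun := fun f => β.toLinearMap ∘ₗ f
           map_add' := fun f g => by ext w; simp
           map_smul' := fun e f => rfl } :
          (Y →ₗ[A] M) →ₗ[(Module.End A Y)ᵐᵒᵖ] (Y →ₗ[A] M'))
        ({ toFun := fun g => β.symm.toLinearMap ∘ₗ g
           map_add' := fun f g => by ext w; simp
           map_smul' := fun e g => rfl } :
          (Y →ₗ[A] M') →ₗ[(Module.End A Y)ᵐᵒᵖ] (Y →ₗ[A] M))
        (by ext g w; simp) (by ext f w; simp)⟩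
  · intro V _ _ hV
    haveI : Nontrivial V := IsSimpleModule.nontrivial (Module.End A Y)ᵐᵒᵖ V
    obtain ⟨v, hv⟩ := exists_ne (0 : V)
    let ψ : (Y →ₗ[A] Y) →ₗ[(Module.End A Y)ᵐᵒᵖ] V :=
      { toFun := fun e => (MulOpposite.op e) • v
        map_add' := fun a b => by simp only [MulOpposite.op_add, add_smul]
        map_smul' := fun a e => by
          show (MulOpposite.op (e ∘ₗ a.unop)) • v = a • ((MulOpposite.op e) • v)
          have h8 : MulOpposite.op (e ∘ₗ a.unop) = a * MulOpposite.op e := by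
            calc MulOpposite.op (e ∘ₗ a.unop) = MulOpposite.op (e * a.unop) := rfl
              _ = MulOpposite.op a.unop * MulOpposite.op e := MulOpposite.op_mul _ _
              _ = a * MulOpposite.op e := by rw [MulOpposite.op_unop]
          rw [h8, mul_smul] }
    have hid : ψ (LinearMap.id : Y →ₗ[A] Y) = v := one_smul _ v
    have hmem : v ∈ Submodule.map ψ (greenHW (⊤ : Submodule A Y)) := by
      have := Submodule.mem_map_of_mem (f := ψ)
        (green_mem_HW.mpr (le_top : LinearMap.range (LinearMap.id : Y →ₗ[A] Y) ≤ ⊤))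
      rwa [hid] at this
    have hne : Submodule.map ψ (greenHW (⊤ : Submodule A Y)) ≠ ⊥ := by
      intro h
      rw [h, Submodule.mem_bot] at hmem
      exact hv hmem
    exact green_part2_aux lam hlam h2 V hV ψ
      (Module.finrank F ↥((⊤ : Submodule A Y).restrictScalars F)) ⊤ le_rfl hne
end

section
/- Let p be a prime, k a field of characteristic p, L a finite group, and M a module over the group algebra k[L] that is both simple and projective. Then every normal p-subgroup of L is trivial. -/
/-!
A `p`-group acting on a nonzero module in characteristic `p` has a nonzero fixed vector, and for
`Q` normal the `Q`-fixed vectors of `M` form a `k[L]`-submodule; so simplicity forces `Q` to act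
trivially on `M`, and the norm element `N = ∑_{q ∈ Q} q` acts on `M` as `|Q| = 0` when `Q ≠ 1`.
Projectivity splits the surjection `a ↦ a • m` (`m ≠ 0`) by some `s : M → k[L]`. The element
`s m` is fixed by left multiplication by `Q`, hence of the form `N * f`, and then
`m = s m • m = N • (f • m) = 0`.
-/

open MonoidAlgebra

theorem CharP.nsmul_eq_zero_of_module (p : ℕ) (k A : Type*) {M : Type*} [CommSemiring k]
    [CharP k p] [Semiring A] [Algebra k A] [AddCommMonoid M] [Module A M] (m : M) :
    p • m = 0 := by
  rw [← Nat.cast_smul_eq_nsmul A, ← map_natCast (algebraMap k A), CharP.cast_eq_zero, map_zero,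
    zero_smul]

theorem IsPGroup.exists_fixed_point_ne_zero {p : ℕ} [Fact p.Prime] {P V : Type*} [Group P]
    [Finite P] (hP : IsPGroup p P) [AddCommGroup V] [DistribMulAction P V]
    (hV : ∀ v : V, p • v = 0) {v : V} (hv : v ≠ 0) :
    ∃ w : V, w ≠ 0 ∧ ∀ g : P, g • w = w := by
  have : Module (ZMod p) V := AddCommGroup.zmodModule hV
  -- a finite `P`-set whose cardinality is a positive power of `p`
  let S : Submodule (ZMod p) V := Submodule.span (ZMod p) (Set.range fun g : P => g • v)
  have hS : ∀ (g : P) {x : V}, x ∈ S → g • x ∈ S := fun g {x} hx =>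
    (Submodule.map_span_le ((DistribSMul.toAddMonoidHom V g).toZModLinearMap p) _ S).2
      (by rintro _ ⟨h, rfl⟩; exact Submodule.subset_span ⟨g * h, mul_smul g h v⟩)
      (Submodule.mem_map_of_mem hx)
  let T : SubMulAction P V := ⟨S, fun g _ hx => hS g hx⟩
  have : Module.Finite (ZMod p) S := Module.Finite.span_of_finite _ (Set.finite_range _)
  have : Finite T := Module.finite_of_finite (ZMod p) (M := S)
  have hvS : v ∈ S := Submodule.subset_span ⟨1, one_smul P v⟩
  have : Nontrivial S := ⟨⟨⟨v, hvS⟩, 0, fun h => hv (congrArg Subtype.val h)⟩⟩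
  have hpT : p ∣ Nat.card T := by
    change p ∣ Nat.card S
    rw [Module.natCard_eq_pow_finrank (K := ZMod p), Nat.card_zmod]
    exact dvd_pow_self p Module.finrank_pos.ne'
  obtain ⟨w, hw_fixed, hw_ne⟩ := hP.exists_fixed_point_of_prime_dvd_card_of_fixed_point T hpT
    (a := ⟨0, S.zero_mem⟩) fun g => Subtype.ext (smul_zero g)
  exact ⟨w, fun h => hw_ne (Subtype.ext h.symm), fun g => congrArg Subtype.val (hw_fixed g)⟩

namespace MonoidAlgebra

variable {R G : Type*} [Semiring R] [Group G]

variable (R) in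
noncomputable def subgroupNorm (Q : Subgroup G) [Fintype Q] : R[G] := ∑ q : Q, single (q : G) 1

theorem exists_subgroupNorm_mul_eq_of_forall_single_mul_eq {Q : Subgroup G} [Fintype Q]
    {b : R[G]} (hb : ∀ q ∈ Q, single q 1 * b = b) : ∃ f : R[G], subgroupNorm R Q * f = b := by
  classical
  -- `b` is constant on right cosets `Q g`; keep its coefficients at chosen representatives `r g`
  let r : G → G := fun g => (Quotient.mk (QuotientGroup.rightRel Q) g).out
  have hr_mem (g : G) : g * (r g)⁻¹ ∈ Q := QuotientGroup.rightRel_apply.mp (Quotient.mk_out g)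
  have hr_mul {q : G} (hq : q ∈ Q) (g : G) : r (q * g) = r g := by
    refine congrArg Quotient.out (Quotient.sound (QuotientGroup.rightRel_apply.mpr ?_))
    simpa [mul_inv_rev] using Q.inv_mem hq
  have hb_coeff {q : G} (hq : q ∈ Q) (g : G) : b.coeff (q * g) = b.coeff g := by
    simpa using congrArg (fun x : R[G] => x.coeff g) (hb q⁻¹ (Q.inv_mem hq))
  refine ⟨ofCoeff (b.coeff.filter fun g => r g = g), MonoidAlgebra.ext (Finsupp.ext fun g => ?_)⟩
  simp only [subgroupNorm, Finset.sum_mul, coeff_sum, Finsupp.finsetSum_apply,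
    coeff_single_mul_apply, one_mul, Finsupp.filter_apply]
  have hterm (q : Q) :
      (if r ((q : G)⁻¹ * g) = (q : G)⁻¹ * g then b.coeff ((q : G)⁻¹ * g) else 0)
        = if q = ⟨g * (r g)⁻¹, hr_mem g⟩ then b.coeff g else 0 := by
    rw [hr_mul (Q.inv_mem q.2), hb_coeff (Q.inv_mem q.2)]
    simp only [Subtype.ext_iff, eq_inv_mul_iff_mul_eq, eq_mul_inv_iff_mul_eq]
  simp only [hterm, Finset.sum_ite_eq', Finset.mem_univ, if_true]

theorem subgroupNorm_smul_of_forall_single_smul_eq {M : Type*} [AddCommMonoid M] [Module R[G] M]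
    {Q : Subgroup G} [Fintype Q] {m : M} (hm : ∀ q ∈ Q, single q (1 : R) • m = m) :
    subgroupNorm R Q • m = Nat.card Q • m := by
  simp [subgroupNorm, Finset.sum_smul, hm]

variable (R) in
def subgroupInvariants (M : Type*) [AddCommMonoid M] [Module R[G] M] (Q : Subgroup G)
    [hQ : Q.Normal] : Submodule R[G] M where
  carrier := {m | ∀ q ∈ Q, single q (1 : R) • m = m}
  zero_mem' _ _ := smul_zero _
  add_mem' hm hn q hq := by rw [smul_add, hm q hq, hn q hq]
  smul_mem' a m hm := by
    induction a using induction_linear with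
    | zero => intro q _; rw [zero_smul, smul_zero]
    | add a b ha hb => intro q hq; rw [add_smul, smul_add, ha q hq, hb q hq]
    | single g c =>
      intro q hq
      have hconj : single q (1 : R) * single g c = single g c * single (g⁻¹ * q * g) 1 := by
        simp [mul_assoc]
      rw [smul_smul, hconj, mul_smul, hm _ (hQ.conj_mem' q hq g)]

end MonoidAlgebra

theorem IsSimpleModule.single_smul_eq_self_of_isPGroup {p : ℕ} [Fact p.Prime] {k G M : Type*}
    [CommRing k] [CharP k p] [Group G] [AddCommGroup M] [Module k[G] M] [IsSimpleModule k[G] M]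
    {Q : Subgroup G} [Q.Normal] [Finite Q] (hQ : IsPGroup p Q) {q : G} (hq : q ∈ Q) (m : M) :
    single q (1 : k) • m = m := by
  have := IsSimpleModule.nontrivial (k[G]) M
  obtain ⟨v, hv⟩ := exists_ne (0 : M)
  let _ : DistribMulAction Q M := .compHom M ((MonoidAlgebra.of k G).comp Q.subtype)
  obtain ⟨w, hw_ne, hw_fixed⟩ :=
    hQ.exists_fixed_point_ne_zero (CharP.nsmul_eq_zero_of_module p k k[G]) hv
  have hne_bot : subgroupInvariants k M Q ≠ ⊥ :=
    (Submodule.ne_bot_iff _).2 ⟨w, fun q hq => hw_fixed ⟨q, hq⟩, hw_ne⟩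
  have htop : subgroupInvariants k M Q = ⊤ := (eq_bot_or_eq_top _).resolve_left hne_bot
  exact (htop ▸ Submodule.mem_top : m ∈ subgroupInvariants k M Q) q hq

/-- if the group algebra `k[L]` of a finite group `L` over a field `k` of
characteristic `p` has a module that is both simple and projective, then every normal
`p`-subgroup of `L` is trivial. -/
theorem normal_pSubgroup_trivial_of_simple_projective
    (p : ℕ) [Fact p.Prime] (k : Type*) [Field k] [CharP k p]
    (L : Type*) [Group L] [Finite L]
    (M : Type*) [AddCommGroup M] [Module (MonoidAlgebra k L) M]
    (hsimple : IsSimpleModule (MonoidAlgebra k L) M)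
    (hproj : Module.Projective (MonoidAlgebra k L) M) :
    ∀ Q : Subgroup L, Q.Normal → IsPGroup p Q → Q = ⊥ := by
  intro Q hQ_normal hQ
  by_contra hQ_ne
  have : Fintype Q := Fintype.ofFinite Q
  have hQ_triv {q : L} (hq : q ∈ Q) (m : M) : single q (1 : k) • m = m :=
    hsimple.single_smul_eq_self_of_isPGroup hQ hq m
  have hp_card : p ∣ Nat.card Q :=
    hQ.card_eq_or_dvd.resolve_left (Subgroup.card_eq_one.not.2 hQ_ne)
  have hnorm (m : M) : subgroupNorm k Q • m = 0 := by
    obtain ⟨c, hc⟩ := hp_card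
    rw [subgroupNorm_smul_of_forall_single_smul_eq fun q hq => hQ_triv hq m, hc, mul_comm,
      mul_nsmul, CharP.nsmul_eq_zero_of_module p k k[L]]
  have := hsimple.nontrivial
  obtain ⟨m, hm⟩ := exists_ne (0 : M)
  obtain ⟨s, hs⟩ := Module.projective_lifting_property (LinearMap.toSpanSingleton k[L] M m)
    LinearMap.id (IsSimpleModule.toSpanSingleton_surjective _ hm)
  obtain ⟨f, hf⟩ := exists_subgroupNorm_mul_eq_of_forall_single_mul_eq (b := s m) fun q hq => by
    rw [← smul_eq_mul, ← s.map_smul, hQ_triv hq]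
  apply hm
  calc m = s m • m := (LinearMap.congr_fun hs m).symm
    _ = subgroupNorm k Q • f • m := by rw [← hf, mul_smul]
    _ = 0 := hnorm _
end

section
/- Let ℓ be a prime, α a finite type, and σ a permutation of α such that σ^ℓ = 1 and σ has no fixed points. Let C be the subgroup of the symmetric group Perm(α) generated by the cycle factors of σ (the pairwise disjoint cycles whose product is σ). Then: (a) C is abelian and C is a normal subgroup of the centralizer of σ in Perm(α); (b) the centralizer of C in Perm(α) equals C. -/
open Equiv Equiv.Perm Subgroup

/-- If `τ` commutes with a cycle factor `c` of `g`, then on the support of `c`, `τ` agrees with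
some integer power of `c`. -/
lemma exists_zpow_eq_on_support {α : Type*} [Fintype α] [DecidableEq α]
    {g c τ : Equiv.Perm α} (hc : c ∈ g.cycleFactorsFinset) (hcomm : Commute τ c) :
    ∃ n : ℤ, ∀ x ∈ c.support, τ x = (c ^ n) x := by
  obtain ⟨hc', hz⟩ := ((mem_cycleFactorsFinset_iff.mp hc).1.commute_iff).mp hcomm
  obtain ⟨n, hn⟩ := Subgroup.mem_zpowers_iff.mp hz
  refine ⟨n, fun x hx => ?_⟩
  rw [hn, ofSubtype_apply_of_mem _ hx, subtypePerm_apply]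

/-- let `σ` be a fixed-point-free permutation of a finite type with `σ ^ ℓ = 1`
(`ℓ` prime), and let `C` be the subgroup generated by the cycle factors of `σ`. Then
(a) `C` is abelian and normal in the centralizer of `σ`, and (b) the centralizer of `C`
equals `C`. -/
theorem centralizer_of_cycle_factors
    (ℓ : ℕ) (hℓ : ℓ.Prime) (α : Type*) [Fintype α] [DecidableEq α]
    (σ : Equiv.Perm α) (hσ : σ ^ ℓ = 1) (hfix : ∀ a : α, σ a ≠ a)
    (C : Subgroup (Equiv.Perm α))
    (hC : C = Subgroup.closure (σ.cycleFactorsFinset : Set (Equiv.Perm α))) :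
    ((∀ x ∈ C, ∀ y ∈ C, x * y = y * x) ∧
      C ≤ Subgroup.centralizer {σ} ∧
      (C.subgroupOf (Subgroup.centralizer {σ})).Normal) ∧
    Subgroup.centralizer (C : Set (Equiv.Perm α)) = C := by
  subst hC
  set S : Set (Equiv.Perm α) := (σ.cycleFactorsFinset : Set (Equiv.Perm α)) with hS
  -- abelian
  have habel : ∀ x ∈ closure S, ∀ y ∈ closure S, x * y = y * x := by
    intro x hx y hy
    refine closure_induction₂ (fun a b ha hb => ?_) (fun a _ => by group)
      (fun a _ => by group) (fun a b c _ _ _ h1 h2 => by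
        rw [mul_assoc, h2, ← mul_assoc, h1, mul_assoc])
      (fun a b c _ _ _ h1 h2 => by rw [← mul_assoc, h1, mul_assoc, h2, ← mul_assoc])
      (fun a b _ _ h => (Commute.inv_left h).eq) (fun a b _ _ h => (Commute.inv_right h).eq)
      hx hy
    rcases eq_or_ne a b with rfl | hab
    · rfl
    · exact ((cycleFactorsFinset_pairwise_disjoint σ (by simpa [hS] using ha)
        (by simpa [hS] using hb) hab).commute).eq
  -- C ≤ centralizer σ
  have hle : closure S ≤ Subgroup.centralizer {σ} := by
    rw [closure_le]
    intro c hc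
    rw [SetLike.mem_coe, mem_centralizer_singleton_iff]
    exact (self_mem_cycle_factors_commute hc).eq
  -- conjugation-invariance
  have hconj : ∀ k ∈ Subgroup.centralizer {σ}, ∀ x ∈ closure S, k * x * k⁻¹ ∈ closure S := by
    intro k hk x hx
    have hkσ : k * σ * k⁻¹ = σ := by
      rw [mem_centralizer_singleton_iff] at hk
      rw [hk]; group
    induction hx using closure_induction with
    | mem c hc =>
      apply Subgroup.subset_closure
      have := (mem_cycleFactorsFinset_conj σ k c).mpr (by simpa [hS] using hc)
      rw [hkσ] at this
      simpa [hS] using this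
    | one => simpa using one_mem _
    | mul a b ha hb hka hkb =>
      have : k * (a * b) * k⁻¹ = (k * a * k⁻¹) * (k * b * k⁻¹) := by group
      rw [this]; exact mul_mem hka hkb
    | inv a ha hka =>
      have : k * a⁻¹ * k⁻¹ = (k * a * k⁻¹)⁻¹ := by group
      rw [this]; exact inv_mem hka
  refine ⟨⟨habel, hle, ?_⟩, ?_⟩
  · constructor
    intro n hn g
    simp only [mem_subgroupOf] at hn ⊢
    exact hconj _ g.2 _ hn
  · apply le_antisymm
    · -- centralizer C ≤ C
      intro τ hτ
      rw [mem_centralizer_iff] at hτ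
      have hcomm : ∀ c ∈ σ.cycleFactorsFinset, Commute τ c := fun c hc =>
        (hτ c (Subgroup.subset_closure (by simpa [hS] using hc))).symm
      -- choose exponents
      choose! m hm using fun c (hc : c ∈ σ.cycleFactorsFinset) =>
        exists_zpow_eq_on_support hc (hcomm c hc)
      set f : Equiv.Perm α → Equiv.Perm α := fun c => c ^ m c with hf
      have hdisj : (σ.cycleFactorsFinset : Set (Equiv.Perm α)).Pairwise
          fun a b => Equiv.Perm.Disjoint (f a) (f b) := fun a ha b hb hab =>
        (cycleFactorsFinset_pairwise_disjoint σ ha hb hab).zpow_disjoint_zpow _ _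
      have hcomm' : (σ.cycleFactorsFinset : Set (Equiv.Perm α)).Pairwise
          fun a b => Commute (f a) (f b) := hdisj.imp fun a b h => h.commute
      set π := σ.cycleFactorsFinset.noncommProd f hcomm' with hπ
      have hπC : π ∈ closure S := by
        apply Subgroup.noncommProd_mem
        intro c hc
        exact zpowers_le.mpr (Subgroup.subset_closure (by simpa [hS] using hc)) (zpow_mem (mem_zpowers c) _)
      have : τ = π := by
        ext a
        have ha : σ a ≠ a := hfix a
        have hca : σ.cycleOf a ∈ σ.cycleFactorsFinset :=
          cycleOf_mem_cycleFactorsFinset_iff.mpr (mem_support.mpr ha)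
        have hasupp : a ∈ (σ.cycleOf a).support :=
          mem_support_cycleOf_iff.mpr ⟨Equiv.Perm.SameCycle.refl _ _, mem_support.mpr ha⟩
        -- compute π a
        have hins : σ.cycleFactorsFinset = insert (σ.cycleOf a)
            (σ.cycleFactorsFinset.erase (σ.cycleOf a)) := (Finset.insert_erase hca).symm
        have hsub : ((σ.cycleFactorsFinset.erase (σ.cycleOf a) : Finset (Equiv.Perm α)) :
            Set (Equiv.Perm α)) ⊆ (σ.cycleFactorsFinset : Set (Equiv.Perm α)) :=
          Finset.coe_subset.mpr (Finset.erase_subset _ _)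
        set c₀ := σ.cycleOf a with hc₀
        set e := σ.cycleFactorsFinset.erase c₀ with he
        have hcomm2 : ((insert c₀ e : Finset (Equiv.Perm α)) : Set (Equiv.Perm α)).Pairwise
            (Function.onFun Commute f) := by rw [← hins]; exact hcomm'
        have step1 : π = f c₀ * e.noncommProd f (hcomm'.mono hsub) := by
          rw [hπ, Finset.noncommProd_congr hins (fun _ _ => rfl) hcomm']
          exact Finset.noncommProd_insert_of_notMem _ _ _ _ (Finset.notMem_erase _ _)
        have hdisje : ((e : Finset (Equiv.Perm α)) : Set (Equiv.Perm α)).Pairwise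
            fun a b => Equiv.Perm.Disjoint (f a) (f b) := hdisj.mono hsub
        have hae : a ∉ (e.noncommProd f (hcomm'.mono hsub)).support := by
          rw [show e.noncommProd f (hcomm'.mono hsub) =
              e.noncommProd f (hdisje.imp fun _ _ h => h.commute) from rfl,
            support_noncommProd hdisje]
          simp only [Finset.mem_biUnion, not_exists]
          rintro d ⟨hd, had⟩
          have hd' : d ∈ σ.cycleFactorsFinset := Finset.mem_of_mem_erase hd
          have hdc : d ≠ c₀ := Finset.ne_of_mem_erase hd
          have : a ∈ d.support := support_zpow_le d (m d) had
          have hbot : a ∈ (⊥ : Finset α) := (Equiv.Perm.Disjoint.disjoint_support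
            (cycleFactorsFinset_pairwise_disjoint σ hd' hca hdc)).le_bot
            (Finset.mem_inter.mpr ⟨this, hasupp⟩)
          simp at hbot
        have hπa : π a = f c₀ a := by
          rw [step1, Equiv.Perm.mul_apply, notMem_support.mp hae]
        rw [hπa, hf]
        exact hm c₀ hca a hasupp
      rw [this]; exact hπC
    · -- C ≤ centralizer C
      intro x hx
      rw [mem_centralizer_iff]
      exact fun y hy => habel y hy x hx
end

section
/- Let d ≥ 9 be an odd integer and let n be a positive integer with 4n ≥ d³ + 3d − 4. Then there exist integers x_1, …, x_d such that x_1 + x_2 + ⋯ + x_d = 0 and 2n = ∑_{i=1}^{d} ( d·x_i² + 2(i−1)·x_i ). -/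
/-!
Write `d = 2k + 1`. Shifting by `m` with `|m| ≤ k` makes `d ∣ n + m + 1`, say `n + m + 1 = dK`, and
we write `m = 3a + 5b` with `|a| ≤ 2`. On the lattice of `x ∈ ℤ⁸` with `∑ xᵢ = 0` the linear form
`∑ i xᵢ` takes the value `-(m + 1)` at `v = (b, a, 0, 0, -a, 1 - b, -1, 0)`, and is constant on
`v + ∑ cⱼ uⱼ` for four pairwise orthogonal lattice vectors `uⱼ` with `‖uⱼ‖² = 4`. It then remains to
make `‖v + ∑ cⱼ uⱼ‖² = 2K`. Completing the square this asks for
`∑ (4cⱼ + tⱼ)² = 8K - 4(a² + a + b² - b + 1)` with `tⱼ = ⟨v, uⱼ⟩` odd. A number `≡ 4 (mod 8)` is a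
sum of four odd squares by Lagrange's theorem, and an odd `w` is `±(4c + t)` for some `c`.
The hypothesis `4n ≥ d³ + 3d - 4` makes the right-hand side nonnegative.
-/

open Finset

theorem Int.sq_emod_four_eq_emod_two (x : ℤ) : x ^ 2 % 4 = x % 2 := by
  rcases Int.even_or_odd' x with ⟨k, rfl | rfl⟩
  · ring_nf; omega
  · ring_nf; omega

theorem Int.exists_odd_four_squares (N : ℤ) (hN : 0 ≤ N) (h8 : N % 8 = 4) :
    ∃ w : Fin 4 → ℤ, (∀ i, Odd (w i)) ∧ ∑ i, w i ^ 2 = N := by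
  obtain ⟨x, y, z, w, hsum, hxy, hzw⟩ :
      ∃ x y z w : ℤ, x ^ 2 + y ^ 2 + z ^ 2 + w ^ 2 = N / 2 ∧ Odd (x + y) ∧ Odd (z + w) := by
    obtain ⟨p, q, r, s, h⟩ := Nat.sum_four_squares (N / 2).toNat
    have hsum : (p : ℤ) ^ 2 + q ^ 2 + r ^ 2 + s ^ 2 = N / 2 := by
      rw [← Int.toNat_of_nonneg (Int.ediv_nonneg hN zero_le_two)]; exact_mod_cast h
    have hp := Int.sq_emod_four_eq_emod_two p
    have hq := Int.sq_emod_four_eq_emod_two q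
    have hr := Int.sq_emod_four_eq_emod_two r
    have hs := Int.sq_emod_four_eq_emod_two s
    -- `N / 2 ≡ 2 [ZMOD 4]`, so exactly two of `p, q, r, s` are odd.
    have pairing : (Odd ((p : ℤ) + q) ∧ Odd ((r : ℤ) + s)) ∨
        (Odd ((p : ℤ) + r) ∧ Odd ((q : ℤ) + s)) := by
      simp only [Int.odd_iff]; omega
    rcases pairing with ⟨h₁, h₂⟩ | ⟨h₁, h₂⟩
    · exact ⟨p, q, r, s, hsum, h₁, h₂⟩
    · exact ⟨p, r, q, s, by linear_combination hsum, h₁, h₂⟩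
  refine ⟨![x + y, x - y, z + w, z - w], ?_, ?_⟩
  · rw [Int.odd_iff] at hxy hzw
    intro i; fin_cases i <;> simp [Int.odd_iff] <;> omega
  · have hN2 : 2 * (N / 2) = N := by omega
    simp only [Fin.sum_univ_four, Matrix.cons_val]
    linear_combination 2 * hsum + hN2

theorem Int.exists_sq_four_mul_add_eq_sq {t w : ℤ} (ht : Odd t) (hw : Odd w) :
    ∃ c : ℤ, (4 * c + t) ^ 2 = w ^ 2 := by
  rw [Int.odd_iff] at ht hw
  rcases (by omega : 4 ∣ w - t ∨ 4 ∣ w + t) with ⟨c, hc⟩ | ⟨c, hc⟩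
  · exact ⟨c, by rw [← hc]; ring⟩
  · exact ⟨-c, by rw [show 4 * -c + t = -w by linarith]; ring⟩

theorem Int.exists_sum_sq_four_mul_add_eq (t : Fin 4 → ℤ) (ht : ∀ i, Odd (t i)) (N : ℤ)
    (hN : 0 ≤ N) (h8 : N % 8 = 4) : ∃ c : Fin 4 → ℤ, ∑ i, (4 * c i + t i) ^ 2 = N := by
  obtain ⟨w, hw, rfl⟩ := Int.exists_odd_four_squares N hN h8
  choose c hc using fun i => Int.exists_sq_four_mul_add_eq_sq (ht i) (hw i)
  exact ⟨c, Finset.sum_congr rfl fun i _ => hc i⟩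

theorem Int.exists_add_eq_mul_and_abs_le (z k : ℤ) (hk : 0 ≤ k) :
    ∃ m q : ℤ, z + m = (2 * k + 1) * q ∧ |m| ≤ k := by
  refine ⟨k - (z + k) % (2 * k + 1), (z + k) / (2 * k + 1), ?_, ?_⟩
  · linarith [Int.mul_ediv_add_emod (z + k) (2 * k + 1)]
  · have := Int.emod_nonneg (z + k) (by omega : 2 * k + 1 ≠ 0)
    have := Int.emod_lt_of_pos (z + k) (by omega : 0 < 2 * k + 1)
    rw [abs_le]; omega

theorem Int.exists_eq_three_mul_add_five_mul (m : ℤ) :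
    ∃ a b : ℤ, m = 3 * a + 5 * b ∧ |a| ≤ 2 :=
  ⟨(2 * m + 2) % 5 - 2, (m - 3 * ((2 * m + 2) % 5 - 2)) / 5, by omega, by rw [abs_le]; omega⟩

theorem Fin.sum_univ_eq_sum_range_of_le {M : Type*} [AddCommMonoid M] {f : ℕ → M} {k d : ℕ}
    (hf : ∀ j ≥ k, f j = 0) (hkd : k ≤ d) : ∑ i : Fin d, f i = ∑ j ∈ range k, f j := by
  rw [Fin.sum_univ_eq_sum_range, Finset.eventually_constant_sum hf hkd]

/-- `v + ∑ cⱼ uⱼ`, extended by zero, with `u₀ = (1, -1, 0, 0, -1, 1, 0, 0)`,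
`u₁ = (0, 1, 0, -1, -1, 0, 1, 0)`, `u₂ = (0, 0, -1, 1, 0, 0, 1, -1)`, `u₃ = (1, 0, -1, 0, 0, -1, 0, 1)`. -/
def kimingVector (a b : ℤ) (c : Fin 4 → ℤ) : ℕ → ℤ
  | 0 => b + c 0 + c 3
  | 1 => a - c 0 + c 1
  | 2 => -c 2 - c 3
  | 3 => -c 1 + c 2
  | 4 => -a - c 0 - c 1
  | 5 => 1 - b + c 0 - c 3
  | 6 => -1 + c 1 + c 2
  | 7 => -c 2 + c 3
  | _ => 0

namespace kimingVector

variable (a b : ℤ) (c : Fin 4 → ℤ)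

theorem eq_zero_of_le {j : ℕ} (hj : 8 ≤ j) : kimingVector a b c j = 0 := by
  match j, hj with
  | _ + 8, _ => rfl

theorem sum_range : ∑ j ∈ range 8, kimingVector a b c j = 0 := by
  simp only [sum_range_succ, sum_range_zero, kimingVector]; ring

theorem sum_range_mul :
    ∑ j ∈ range 8, (j : ℤ) * kimingVector a b c j = -(3 * a + 5 * b) - 1 := by
  simp only [sum_range_succ, sum_range_zero, kimingVector]; push_cast; ring

theorem four_mul_sum_range_sq :
    4 * ∑ j ∈ range 8, kimingVector a b c j ^ 2 =
      ∑ i, (4 * c i + ![1, 2 * a - 1, -1, 2 * b - 1] i) ^ 2 +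
        4 * (a ^ 2 + a + b ^ 2 - b + 1) := by
  simp only [sum_range_succ, sum_range_zero, kimingVector, Fin.sum_univ_four, Matrix.cons_val]
  ring

end kimingVector

theorem mul_sq_add_sq_le_of_pow_three_le {k n m a b : ℤ} (hk : 4 ≤ k)
    (hn : (2 * k + 1) ^ 3 + 3 * (2 * k + 1) - 4 ≤ 4 * n)
    (hm : |m| ≤ k) (hab : m = 3 * a + 5 * b) (ha : |a| ≤ 2) :
    (2 * k + 1) * (a ^ 2 + a + b ^ 2 - b + 1) ≤ 2 * (n + m + 1) := by
  rw [abs_le] at hm ha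
  have hb : (5 * b) ^ 2 ≤ (k + 6) ^ 2 := sq_le_sq' (by omega) (by omega)
  have ha2 : a ^ 2 + a ≤ 6 := by nlinarith
  have hQ : 25 * (a ^ 2 + a + b ^ 2 - b + 1) ≤ k ^ 2 + 17 * k + 241 := by nlinarith
  nlinarith

theorem kiming_diophantine_general
    (d : ℕ) (n : ℤ) (hd9 : 9 ≤ d) (hdodd : Odd d)
    (hbound : (d : ℤ) ^ 3 + 3 * d - 4 ≤ 4 * n) :
    ∃ x : Fin d → ℤ, (∑ i, x i) = 0 ∧
      2 * n = ∑ i : Fin d, ((d : ℤ) * (x i) ^ 2 + 2 * ((i : ℕ) : ℤ) * x i) := by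
  obtain ⟨k, rfl⟩ := hdodd
  push_cast at hbound ⊢
  obtain ⟨m, K, hK, hm⟩ := Int.exists_add_eq_mul_and_abs_le (n + 1) k (by positivity)
  obtain ⟨a, b, hab, ha⟩ := Int.exists_eq_three_mul_add_five_mul m
  have hQ : a ^ 2 + a + b ^ 2 - b + 1 ≤ 2 * K := by
    refine le_of_mul_le_mul_left ?_ (by positivity : (0 : ℤ) < 2 * k + 1)
    linarith [mul_sq_add_sq_le_of_pow_three_le (by omega) hbound hm hab ha]
  obtain ⟨c, hc⟩ := Int.exists_sum_sq_four_mul_add_eq ![1, 2 * a - 1, -1, 2 * b - 1]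
    (by intro i; fin_cases i <;> simp)
    (8 * K - 4 * (a ^ 2 + a + b ^ 2 - b + 1)) (by linarith)
    (by have := Int.sq_emod_four_eq_emod_two a; have := Int.sq_emod_four_eq_emod_two b; omega)
  have hsq : ∑ j ∈ range 8, kimingVector a b c j ^ 2 = 2 * K := by
    linarith [kimingVector.four_mul_sum_range_sq a b c]
  refine ⟨fun i => kimingVector a b c i, ?_, ?_⟩
  · rw [Fin.sum_univ_eq_sum_range_of_le (fun j => kimingVector.eq_zero_of_le a b c) (by omega)]
    exact kimingVector.sum_range a b c
  · rw [Fin.sum_univ_eq_sum_range_of_le (by simp +contextual [kimingVector.eq_zero_of_le])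
      (by omega : 8 ≤ 2 * k + 1) (f := fun j : ℕ =>
        (2 * k + 1 : ℤ) * kimingVector a b c j ^ 2 + 2 * (j : ℤ) * kimingVector a b c j)]
    simp only [sum_add_distrib, ← mul_sum, mul_assoc, hsq, kimingVector.sum_range_mul]
    linear_combination 2 * hK - 2 * hab

/-- if `d ≥ 9` is odd and `4n ≥ d³ + 3d − 4` (`n ≥ 1`), then there are integers
`x_1, …, x_d` with `x_1 + ⋯ + x_d = 0` and `2n = ∑_{i=1}^{d} (d·x_i² + 2(i−1)·x_i)`
(indices `0`-based below, so `i - 1` becomes `i`). -/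
theorem kiming_diophantine
    (d : ℕ) (n : ℤ) (hd9 : 9 ≤ d) (hdodd : Odd d) (hn : 1 ≤ n)
    (hbound : (d : ℤ) ^ 3 + 3 * d - 4 ≤ 4 * n) :
    ∃ x : Fin d → ℤ, (∑ i, x i) = 0 ∧
      2 * n = ∑ i : Fin d, ((d : ℤ) * (x i) ^ 2 + 2 * ((i : ℕ) : ℤ) * x i) :=
  kiming_diophantine_general d n hd9 hdodd hbound
end

section
/- Let d ≥ 9 be an odd integer and let n be a positive integer with 4n ≥ d³ + 3d − 4. Then there exist integers q and r such that n = dq + r, q is odd, and either (r is odd and r² ≤ 4q) or (r ≡ 2 (mod 4) and r² ≤ 16q). -/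
/-!
Both cases reduce to writing `n = d q + k s` with `q, s` odd and `-d ≤ s ≤ d - 2`, where `k = 1`
for even `n` (then `r = s`) and `k = 2` for odd `n` (then `r = 2 s ≡ 2 mod 4`). The odd numbers
in `[-d, d - 2]` represent every residue modulo the odd number `d`, so `s` can be chosen with
`k s ≡ n [ZMOD d]`, and the parity of `n - k` makes the quotient `q` odd. The bound on `r` then
comes from `d s² + 4 k s ≤ d³ + 3 d - 4 ≤ 4 n = 4 d q + 4 k s`.
-/

namespace Kiming

theorem exists_odd_modEq_of_odd {d : ℤ} (hd : 0 < d) (hdodd : Odd d) (m : ℤ) :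
    ∃ s, Odd s ∧ -d ≤ s ∧ s ≤ d - 2 ∧ s ≡ m [ZMOD d] := by
  obtain ⟨j, rfl⟩ := hdodd
  -- `j + 1` is the inverse of `2` modulo `2 j + 1`
  set u := m * (j + 1) % (2 * j + 1) with hu
  have hu₀ : 0 ≤ u := Int.emod_nonneg _ hd.ne'
  have hu₁ : u < 2 * j + 1 := Int.emod_lt_of_pos _ hd
  refine ⟨2 * u - (2 * j + 1), ⟨u - j - 1, by ring⟩, by omega, by omega, ?_⟩
  refine (Int.modEq_iff_dvd.mpr ⟨m - 1 - 2 * (m * (j + 1) / (2 * j + 1)), ?_⟩).symm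
  rw [hu, Int.emod_def]
  ring

theorem exists_odd_odd_decomposition {d : ℤ} (hd : 0 < d) (hdodd : Odd d) {k n m : ℤ}
    (hm : k * m ≡ n [ZMOD d]) (hnk : Odd (n - k)) :
    ∃ q s, n = d * q + k * s ∧ Odd q ∧ Odd s ∧ -d ≤ s ∧ s ≤ d - 2 := by
  obtain ⟨s, hs, hs₁, hs₂, hsm⟩ := exists_odd_modEq_of_odd hd hdodd m
  obtain ⟨q, hq⟩ := Int.modEq_iff_dvd.mp ((hsm.mul_left k).trans hm)
  have hdq : Odd (d * q) := by
    obtain ⟨t, rfl⟩ := hs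
    rw [← hq, show n - k * (2 * t + 1) = n - k - 2 * (k * t) by ring]
    exact hnk.sub_even (even_two_mul _)
  exact ⟨q, s, by linarith, Int.Odd.of_mul_right hdq, hs, hs₁, hs₂⟩

theorem mul_sq_add_le {d k s : ℤ} (hk : 0 < k) (hkd : 2 * k ≤ d) (hs₁ : -d ≤ s)
    (hs₂ : s ≤ d - 2) : d * s ^ 2 + 4 * k * s ≤ d ^ 3 + 3 * d - 4 := by
  have hconvex : s ^ 2 ≤ d ^ 2 - 2 * d - 2 * s := by nlinarith
  nlinarith [mul_le_mul_of_nonneg_left hconvex (by omega : (0 : ℤ) ≤ d),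
    mul_le_mul_of_nonneg_left hs₁ (by omega : (0 : ℤ) ≤ 2 * d - 4 * k)]

theorem sq_le_four_mul {d k n q s : ℤ} (hk : 0 < k) (hkd : 2 * k ≤ d) (hs₁ : -d ≤ s)
    (hs₂ : s ≤ d - 2) (hbound : d ^ 3 + 3 * d - 4 ≤ 4 * n) (hn : n = d * q + k * s) :
    s ^ 2 ≤ 4 * q := by
  have h : d * s ^ 2 ≤ d * (4 * q) := by nlinarith [mul_sq_add_le hk hkd hs₁ hs₂]
  exact le_of_mul_le_mul_left h (by omega)

end Kiming

open Kiming in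
theorem kiming_division_general
    (d n : ℤ) (hd9 : 9 ≤ d) (hdodd : Odd d)
    (hbound : d ^ 3 + 3 * d - 4 ≤ 4 * n) :
    ∃ q r : ℤ, n = d * q + r ∧ Odd q ∧
      ((Odd r ∧ r ^ 2 ≤ 4 * q) ∨ (r % 4 = 2 ∧ r ^ 2 ≤ 16 * q)) := by
  have hd : 0 < d := by omega
  rcases Int.even_or_odd n with hne | hno
  · obtain ⟨q, s, hn, hq, hs, hs₁, hs₂⟩ :=
      exists_odd_odd_decomposition (m := n) hd hdodd (by rw [one_mul]) (hne.sub_odd odd_one)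
    have hsq := sq_le_four_mul one_pos (by omega) hs₁ hs₂ hbound hn
    exact ⟨q, s, by rw [hn, one_mul], hq, Or.inl ⟨hs, hsq⟩⟩
  · obtain ⟨j, hj⟩ := hdodd
    have hm : 2 * (n * (j + 1)) ≡ n [ZMOD d] := Int.modEq_iff_dvd.mpr ⟨-n, by rw [hj]; ring⟩
    obtain ⟨q, s, hn, hq, ⟨t, rfl⟩, hs₁, hs₂⟩ :=
      exists_odd_odd_decomposition hd ⟨j, hj⟩ hm (hno.sub_even even_two)
    have hsq := sq_le_four_mul two_pos (by omega) hs₁ hs₂ hbound hn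
    exact ⟨q, 2 * (2 * t + 1), hn, hq, Or.inr ⟨by omega, by linarith⟩⟩

/-- if `d ≥ 9` is odd and `4n ≥ d³ + 3d − 4` (`n ≥ 1`), then `n = dq + r` for
some integers `q, r` with `q` odd and either (`r` odd and `r² ≤ 4q`) or
(`r ≡ 2 (mod 4)` and `r² ≤ 16q`). -/
theorem kiming_division
    (d n : ℤ) (hd9 : 9 ≤ d) (hdodd : Odd d) (hn : 1 ≤ n)
    (hbound : d ^ 3 + 3 * d - 4 ≤ 4 * n) :
    ∃ q r : ℤ, n = d * q + r ∧ Odd q ∧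
      ((Odd r ∧ r ^ 2 ≤ 4 * q) ∨ (r % 4 = 2 ∧ r ^ 2 ≤ 16 * q)) :=
  kiming_division_general d n hd9 hdodd hbound
end
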